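/- arXiv:2008.02173 — 8 statements merged into one kernel-verified Lean document; each statement's English description precedes it below -/
import Mathlib

section
/- If a finite simple graph G is a B₀-VPG graph, then no two distinct vertices of an induced C₄ in G are diamond related, and G is C̄₆-free. -/
/-- A closed axis-parallel line segment in the plane, designated horizontal or
vertical; degenerate one-point segments are allowed. -/
structure Seg where
  horiz : Bool
  coord : ℝ
  lo : ℝ
  hi : ℝ
  lo_le_hi : lo ≤ hi

/-- The set of points of an axis-parallel segment. -/
def Seg.set (s : Seg) : Set (ℝ × ℝ) :=
  if s.horiz then {p : ℝ × ℝ | p.2 = s.coord ∧ p.1 ∈ Set.Icc s.lo s.hi}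
  else {p : ℝ × ℝ | p.1 = s.coord ∧ p.2 ∈ Set.Icc s.lo s.hi}

/-- `I` is a B₀-VPG representation of `G`: two distinct vertices are adjacent
iff their segments intersect. -/
def IsB0Rep {V : Type*} (G : SimpleGraph V) (I : V → Seg) : Prop :=
  ∀ u v : V, u ≠ v → (G.Adj u v ↔ ((I u).set ∩ (I v).set).Nonempty)

/-- `G` is a B₀-VPG graph. -/
def IsB0VPG {V : Type*} (G : SimpleGraph V) : Prop :=
  ∃ I : V → Seg, IsB0Rep G I

/-- `G` is a cocomparability graph. -/
def IsCocomparability {V : Type*} (G : SimpleGraph V) : Prop :=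
  ∃ P : PartialOrder V, ∀ u v : V, u ≠ v →
    (G.Adj u v ↔ ¬ (P.le u v ∨ P.le v u))

/-- `G` is a comparability graph. -/
def IsComparability {V : Type*} (G : SimpleGraph V) : Prop :=
  ∃ P : PartialOrder V, ∀ u v : V, u ≠ v →
    (G.Adj u v ↔ (P.le u v ∨ P.le v u))

/-- `a, b, c, d` form an induced 4-cycle in `G`. -/
def IsInducedC4 {V : Type*} (G : SimpleGraph V) (a b c d : V) : Prop :=
  a ≠ b ∧ a ≠ c ∧ a ≠ d ∧ b ≠ c ∧ b ≠ d ∧ c ≠ d ∧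
  G.Adj a b ∧ G.Adj b c ∧ G.Adj c d ∧ G.Adj d a ∧ ¬ G.Adj a c ∧ ¬ G.Adj b d

/-- `xy` is a diamond diagonal of `G`. -/
def IsDiamondDiagonal {V : Type*} (G : SimpleGraph V) (x y : V) : Prop :=
  G.Adj x y ∧ ∃ u w : V, u ≠ w ∧ u ≠ x ∧ u ≠ y ∧ w ≠ x ∧ w ≠ y ∧
    ¬ G.Adj u w ∧ G.Adj u x ∧ G.Adj u y ∧ G.Adj w x ∧ G.Adj w y

/-- `x` and `y` are diamond related in `G`: they are joined by a sequence of
diamond diagonals. -/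
def DiamondRelated {V : Type*} (G : SimpleGraph V) : V → V → Prop :=
  Relation.ReflTransGen (IsDiamondDiagonal G)

/-- No two distinct vertices of an induced `C₄` of `G` are diamond related. -/
def NoC4DiamondRelated {V : Type*} (G : SimpleGraph V) : Prop :=
  ∀ a b c d : V, IsInducedC4 G a b c d →
    ∀ x ∈ ({a, b, c, d} : Set V), ∀ y ∈ ({a, b, c, d} : Set V),
      x ≠ y → ¬ DiamondRelated G x y

/-- The complement of the 6-cycle. -/
def C6bar : SimpleGraph (Fin 6) where
  Adj i j := i ≠ j ∧ j - i ≠ 1 ∧ i - j ≠ 1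
  symm := by
    constructor
    intro i j h
    exact ⟨h.1.symm, h.2.2, h.2.1⟩
  loopless := by
    constructor
    intro i h
    exact h.1 rfl

/-- `G` contains no induced copy of the complement of `C₆`. -/
def C6barFree {V : Type*} (G : SimpleGraph V) : Prop :=
  ¬ ∃ f : Fin 6 → V, Function.Injective f ∧
      ∀ i j : Fin 6, C6bar.Adj i j ↔ G.Adj (f i) (f j)

/-- `σ` is an umbrella-free (cocomparability) ordering of `G`. -/
def UmbrellaFree {V : Type*} (G : SimpleGraph V) (σ : LinearOrder V) : Prop :=
  ∀ x y z : V, σ.lt x y → σ.lt y z → G.Adj x z → (G.Adj x y ∨ G.Adj y z)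
/-!
Slicing along a horizontal line turns segments into intervals. Hence segments meeting a common line
behave like intervals: three pairwise meeting ones have a common point, and four of them cannot
form an induced `C₄`. Three pairwise meeting segments all meet the line carrying one of them, so
Helly's property holds for all axis-parallel segments.

If `xy` is a diamond diagonal, then `I x` and `I y` lie on one line: were they perpendicular, both
common neighbours would pass through their crossing point and meet. In an induced `C₄` `a b c d`, a
point of `I d ∩ I a` and a point of `I b ∩ I c` never share a coordinate (the slice along the line
through both would be an interval `C₄`), so no two of the four segments lie on one line.

In `C̄₆` the triangles `0 2 4` and `1 3 5` have common points `P` and `Q`, and `0 3 1 4` is an induced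
`C₄` with `P ∈ I 4 ∩ I 0`, `Q ∈ I 3 ∩ I 1`; hence `P` and `Q` share no coordinate. Each point of
`I i ∩ I (i + 3)` is then one of the two other corners of the rectangle spanned by `P` and `Q`, so
two of these three points coincide, and two non-adjacent segments meet.
-/

namespace Set

variable {α : Type*} [LinearOrder α]

-- the witness is the median of `x, y, z`
theorem uIcc_inter_uIcc_inter_uIcc_nonempty (x y z : α) :
    (uIcc x y ∩ uIcc y z ∩ uIcc z x).Nonempty :=
  ⟨max (min x y) (min (max x y) z), by simp only [mem_inter_iff, mem_uIcc]; grind⟩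

theorem OrdConnected.inter_inter_nonempty {A B C : Set α} (hA : A.OrdConnected)
    (hB : B.OrdConnected) (hC : C.OrdConnected) (hAB : (A ∩ B).Nonempty)
    (hBC : (B ∩ C).Nonempty) (hCA : (C ∩ A).Nonempty) : (A ∩ B ∩ C).Nonempty := by
  obtain ⟨x, hxA, hxB⟩ := hAB
  obtain ⟨y, hyB, hyC⟩ := hBC
  obtain ⟨z, hzC, hzA⟩ := hCA
  obtain ⟨w, ⟨hxy, hyz⟩, hzx⟩ := uIcc_inter_uIcc_inter_uIcc_nonempty x y z
  exact ⟨w, ⟨hA.uIcc_subset hzA hxA hzx, hB.uIcc_subset hxB hyB hxy⟩,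
    hC.uIcc_subset hyC hzC hyz⟩

/-- Interval graphs have no induced `C₄`. -/
theorem OrdConnected.inter_nonempty_or_inter_nonempty_of_cycle {A B C D : Set α}
    (hA : A.OrdConnected) (hB : B.OrdConnected) (hC : C.OrdConnected)
    (hD : D.OrdConnected) (hAB : (A ∩ B).Nonempty) (hBC : (B ∩ C).Nonempty)
    (hCD : (C ∩ D).Nonempty) (hDA : (D ∩ A).Nonempty) :
    (A ∩ C).Nonempty ∨ (B ∩ D).Nonempty := by
  obtain ⟨x₁, hx₁A, hx₁B⟩ := hAB
  obtain ⟨x₃, hx₃C, hx₃D⟩ := hCD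
  obtain ⟨x₄, hx₄D, hx₄A⟩ := hDA
  -- `uIcc x₃ x₁` is covered by `uIcc x₃ x₄ ⊆ D` and `uIcc x₄ x₁ ⊆ A`
  obtain ⟨y, ⟨hyB, hyC⟩, hy⟩ := hB.inter_inter_nonempty hC ordConnected_uIcc hBC
    ⟨x₃, hx₃C, left_mem_uIcc⟩ ⟨x₁, right_mem_uIcc, hx₁B⟩
  rcases uIcc_subset_uIcc_union_uIcc hy with hy | hy
  · exact Or.inr ⟨y, hyB, hD.uIcc_subset hx₃D hx₄D hy⟩
  · exact Or.inl ⟨y, hA.uIcc_subset hx₄A hx₁A hy, hyC⟩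

end Set

instance : DecidableRel C6bar.Adj := fun i j =>
  inferInstanceAs (Decidable (i ≠ j ∧ j - i ≠ 1 ∧ i - j ≠ 1))

def AxisAligned (p q : ℝ × ℝ) : Prop := p.1 = q.1 ∨ p.2 = q.2

namespace Seg

open Set

/-- The axis-parallel line carrying `s`, given by its direction and its constant coordinate. -/
def line (s : Seg) : Bool × ℝ := (s.horiz, s.coord)

def swap (s : Seg) : Seg := ⟨!s.horiz, s.coord, s.lo, s.hi, s.lo_le_hi⟩

def slice (s : Seg) (k : ℝ) : Set ℝ := {x | (x, k) ∈ s.set}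

variable {s t u a b c d : Seg} {p q r : ℝ × ℝ}

theorem mem_set_of_horiz (h : s.horiz = true) :
    p ∈ s.set ↔ p.2 = s.coord ∧ p.1 ∈ Icc s.lo s.hi := by
  simp [Seg.set, h]

theorem mem_set_of_vert (h : s.horiz = false) :
    p ∈ s.set ↔ p.1 = s.coord ∧ p.2 ∈ Icc s.lo s.hi := by
  simp [Seg.set, h]

theorem swap_set (s : Seg) : s.swap.set = Prod.swap ⁻¹' s.set := by
  ext p
  cases h : s.horiz <;> simp [Seg.set, swap, h]

theorem swap_inter_nonempty :
    (s.swap.set ∩ t.swap.set).Nonempty ↔ (s.set ∩ t.set).Nonempty := by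
  rw [swap_set, swap_set, ← preimage_inter, Prod.swap_surjective.nonempty_preimage]

theorem swap_mem_swap_set : p.swap ∈ s.swap.set ↔ p ∈ s.set := by
  simp [swap_set]

theorem line_eq_iff : s.line = t.line ↔ s.horiz = t.horiz ∧ s.coord = t.coord :=
  Prod.ext_iff

theorem axisAligned_of_line_eq (h : s.line = t.line) (hp : p ∈ s.set) (hq : q ∈ t.set) :
    AxisAligned p q := by
  obtain ⟨hh, hc⟩ := line_eq_iff.1 h
  cases hs : s.horiz
  · exact Or.inl (((mem_set_of_vert hs).1 hp).1.trans
      (hc.trans ((mem_set_of_vert (hh ▸ hs)).1 hq).1.symm))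
  · exact Or.inr (((mem_set_of_horiz hs).1 hp).1.trans
      (hc.trans ((mem_set_of_horiz (hh ▸ hs)).1 hq).1.symm))

theorem line_eq_of_horiz_eq (h : s.horiz = t.horiz) (hst : (s.set ∩ t.set).Nonempty) :
    s.line = t.line := by
  obtain ⟨p, hps, hpt⟩ := hst
  refine Prod.ext h ?_
  cases hs : s.horiz
  · exact ((mem_set_of_vert hs).1 hps).1.symm.trans ((mem_set_of_vert (h ▸ hs)).1 hpt).1
  · exact ((mem_set_of_horiz hs).1 hps).1.symm.trans ((mem_set_of_horiz (h ▸ hs)).1 hpt).1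

theorem mem_of_inter_nonempty_of_horiz_of_vert (hs : s.horiz = true) (ht : t.horiz = false)
    (hus : (u.set ∩ s.set).Nonempty) (hut : (u.set ∩ t.set).Nonempty) :
    (t.coord, s.coord) ∈ u.set := by
  obtain ⟨p, hpu, hps⟩ := hus
  obtain ⟨q, hqu, hqt⟩ := hut
  have hp : p.2 = s.coord := ((mem_set_of_horiz hs).1 hps).1
  have hq : q.1 = t.coord := ((mem_set_of_vert ht).1 hqt).1
  rcases axisAligned_of_line_eq rfl hpu hqu with h | h
  · exact (Prod.ext (h.trans hq) hp : p = (t.coord, s.coord)) ▸ hpu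
  · exact (Prod.ext hq (h.symm.trans hp) : q = (t.coord, s.coord)) ▸ hqu

theorem line_eq_of_diamond (hab : (a.set ∩ b.set).Nonempty)
    (hsa : (s.set ∩ a.set).Nonempty) (hsb : (s.set ∩ b.set).Nonempty)
    (hta : (t.set ∩ a.set).Nonempty) (htb : (t.set ∩ b.set).Nonempty)
    (hst : ¬(s.set ∩ t.set).Nonempty) : a.line = b.line := by
  cases ha : a.horiz <;> cases hb : b.horiz
  · exact line_eq_of_horiz_eq (ha.trans hb.symm) hab
  · exact absurd ⟨_, mem_of_inter_nonempty_of_horiz_of_vert hb ha hsb hsa,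
      mem_of_inter_nonempty_of_horiz_of_vert hb ha htb hta⟩ hst
  · exact absurd ⟨_, mem_of_inter_nonempty_of_horiz_of_vert ha hb hsa hsb,
      mem_of_inter_nonempty_of_horiz_of_vert ha hb hta htb⟩ hst
  · exact line_eq_of_horiz_eq (ha.trans hb.symm) hab

theorem ordConnected_slice (s : Seg) (k : ℝ) : (s.slice k).OrdConnected := by
  refine ⟨fun x hx y hy z hz => ?_⟩
  cases h : s.horiz
  · simp only [slice, mem_ofPred_eq, mem_set_of_vert h, mem_Icc] at hx hy hz ⊢
    grind
  · simp only [slice, mem_ofPred_eq, mem_set_of_horiz h, mem_Icc] at hx hy hz ⊢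
    grind

theorem fst_mem_slice {k : ℝ} (hp : p ∈ s.set) (hs : (s.slice k).Nonempty) :
    p.1 ∈ s.slice k := by
  obtain ⟨x, hx⟩ := hs
  rcases axisAligned_of_line_eq rfl hx hp with h | h
  · exact h ▸ hx
  · change k = p.2 at h
    subst h
    exact hp

theorem slice_inter_nonempty {k : ℝ} (hst : (s.set ∩ t.set).Nonempty)
    (hs : (s.slice k).Nonempty) (ht : (t.slice k).Nonempty) :
    (s.slice k ∩ t.slice k).Nonempty :=
  let ⟨_, hps, hpt⟩ := hst
  ⟨_, fst_mem_slice hps hs, fst_mem_slice hpt ht⟩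

theorem inter_inter_nonempty_of_horiz (hb : b.horiz = true) (hab : (a.set ∩ b.set).Nonempty)
    (hbc : (b.set ∩ c.set).Nonempty) (hca : (c.set ∩ a.set).Nonempty) :
    (a.set ∩ b.set ∩ c.set).Nonempty := by
  obtain ⟨p, hpa, hpb⟩ := hab
  obtain ⟨q, hqb, hqc⟩ := hbc
  have hqp : q.2 = p.2 :=
    ((mem_set_of_horiz hb).1 hqb).1.trans ((mem_set_of_horiz hb).1 hpb).1.symm
  have ha : (a.slice p.2).Nonempty := ⟨p.1, hpa⟩
  have hb' : (b.slice p.2).Nonempty := ⟨p.1, hpb⟩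
  have hc : (c.slice p.2).Nonempty := ⟨q.1, hqp ▸ hqc⟩
  obtain ⟨x, ⟨hxa, hxb⟩, hxc⟩ := (ordConnected_slice a _).inter_inter_nonempty
    (ordConnected_slice b _) (ordConnected_slice c _) (slice_inter_nonempty ⟨p, hpa, hpb⟩ ha hb')
    (slice_inter_nonempty ⟨q, hqb, hqc⟩ hb' hc) (slice_inter_nonempty hca hc ha)
  exact ⟨(x, p.2), ⟨hxa, hxb⟩, hxc⟩

theorem inter_inter_nonempty (hab : (a.set ∩ b.set).Nonempty) (hbc : (b.set ∩ c.set).Nonempty)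
    (hca : (c.set ∩ a.set).Nonempty) : (a.set ∩ b.set ∩ c.set).Nonempty := by
  cases hb : b.horiz
  · have := inter_inter_nonempty_of_horiz (a := a.swap) (b := b.swap) (c := c.swap)
      (by simp [swap, hb]) (swap_inter_nonempty.2 hab) (swap_inter_nonempty.2 hbc)
      (swap_inter_nonempty.2 hca)
    rwa [swap_set, swap_set, swap_set, ← preimage_inter, ← preimage_inter,
      Prod.swap_surjective.nonempty_preimage] at this
  · exact inter_inter_nonempty_of_horiz hb hab hbc hca

theorem false_of_cycle_of_snd_eq (hab : (a.set ∩ b.set).Nonempty)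
    (hcd : (c.set ∩ d.set).Nonempty) (hac : ¬(a.set ∩ c.set).Nonempty)
    (hbd : ¬(b.set ∩ d.set).Nonempty) (hpd : p ∈ d.set) (hpa : p ∈ a.set) (hqb : q ∈ b.set)
    (hqc : q ∈ c.set) (hpq : p.2 = q.2) : False := by
  have hA : p.1 ∈ a.slice p.2 := hpa
  have hD : p.1 ∈ d.slice p.2 := hpd
  have hB : q.1 ∈ b.slice p.2 := hpq ▸ hqb
  have hC : q.1 ∈ c.slice p.2 := hpq ▸ hqc
  rcases (ordConnected_slice a _).inter_nonempty_or_inter_nonempty_of_cycle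
    (ordConnected_slice b _) (ordConnected_slice c _) (ordConnected_slice d _)
    (slice_inter_nonempty hab ⟨_, hA⟩ ⟨_, hB⟩) ⟨_, hB, hC⟩
    (slice_inter_nonempty hcd ⟨_, hC⟩ ⟨_, hD⟩) ⟨_, hD, hA⟩ with ⟨x, hxa, hxc⟩ | ⟨x, hxb, hxd⟩
  exacts [hac ⟨_, hxa, hxc⟩, hbd ⟨_, hxb, hxd⟩]

theorem not_axisAligned_of_cycle (hab : (a.set ∩ b.set).Nonempty)
    (hcd : (c.set ∩ d.set).Nonempty) (hac : ¬(a.set ∩ c.set).Nonempty)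
    (hbd : ¬(b.set ∩ d.set).Nonempty) (hpd : p ∈ d.set) (hpa : p ∈ a.set) (hqb : q ∈ b.set)
    (hqc : q ∈ c.set) : ¬AxisAligned p q := by
  rintro (hpq | hpq)
  · exact false_of_cycle_of_snd_eq (swap_inter_nonempty.2 hab) (swap_inter_nonempty.2 hcd)
      (mt swap_inter_nonempty.1 hac) (mt swap_inter_nonempty.1 hbd) (swap_mem_swap_set.2 hpd)
      (swap_mem_swap_set.2 hpa) (swap_mem_swap_set.2 hqb) (swap_mem_swap_set.2 hqc) hpq
  · exact false_of_cycle_of_snd_eq hab hcd hac hbd hpd hpa hqb hqc hpq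

theorem eq_or_eq_of_not_axisAligned (hp : p ∈ s.set) (hr : r ∈ s.set) (hq : q ∈ t.set)
    (hr' : r ∈ t.set) (hpq : ¬AxisAligned p q) : r = (q.1, p.2) ∨ r = (p.1, q.2) := by
  rcases axisAligned_of_line_eq rfl hp hr with h | h <;>
    rcases axisAligned_of_line_eq rfl hq hr' with h' | h'
  · exact absurd (Or.inl (h.trans h'.symm)) hpq
  · exact Or.inr (Prod.ext h.symm h'.symm)
  · exact Or.inl (Prod.ext h'.symm h.symm)
  · exact absurd (Or.inr (h.trans h'.symm)) hpq

theorem false_of_c6bar (s : Fin 6 → Seg)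
    (hadj : ∀ i j, C6bar.Adj i j → ((s i).set ∩ (s j).set).Nonempty)
    (hnon : ∀ i, ¬((s i).set ∩ (s (i + 1)).set).Nonempty) : False := by
  obtain ⟨P, ⟨hP0, hP2⟩, hP4⟩ := inter_inter_nonempty (hadj 0 2 (by decide))
    (hadj 2 4 (by decide)) (hadj 4 0 (by decide))
  obtain ⟨Q, ⟨hQ1, hQ3⟩, hQ5⟩ := inter_inter_nonempty (hadj 1 3 (by decide))
    (hadj 3 5 (by decide)) (hadj 5 1 (by decide))
  obtain ⟨R₀, hR₀0, hR₀3⟩ := hadj 0 3 (by decide)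
  obtain ⟨R₁, hR₁1, hR₁4⟩ := hadj 1 4 (by decide)
  obtain ⟨R₂, hR₂2, hR₂5⟩ := hadj 2 5 (by decide)
  have hPQ : ¬AxisAligned P Q :=
    not_axisAligned_of_cycle ⟨R₀, hR₀0, hR₀3⟩ ⟨R₁, hR₁1, hR₁4⟩ (hnon 0) (hnon 3) hP4 hP0 hQ3 hQ1
  have h₀ := eq_or_eq_of_not_axisAligned hP0 hR₀0 hQ3 hR₀3 hPQ
  have h₁ := eq_or_eq_of_not_axisAligned hP4 hR₁4 hQ1 hR₁1 hPQ
  have h₂ := eq_or_eq_of_not_axisAligned hP2 hR₂2 hQ5 hR₂5 hPQ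
  have : R₀ = R₁ ∨ R₁ = R₂ ∨ R₂ = R₀ := by grind
  rcases this with h | h | h
  · exact hnon 0 ⟨R₀, hR₀0, h ▸ hR₁1⟩
  · exact hnon 1 ⟨R₁, hR₁1, h ▸ hR₂2⟩
  · exact hnon 2 ⟨R₂, hR₂2, h ▸ hR₀3⟩

end Seg

theorem IsInducedC4.rotate {V : Type*} {G : SimpleGraph V} {a b c d : V}
    (h : IsInducedC4 G a b c d) : IsInducedC4 G b c d a := by
  obtain ⟨hab, hac, had, hbc, hbd, hcd, eab, ebc, ecd, eda, nac, nbd⟩ := h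
  exact ⟨hbc, hbd, hab.symm, hcd, hac.symm, had.symm, ebc, ecd, eda, eab, nbd,
    fun h => nac h.symm⟩

namespace IsB0Rep

variable {V : Type*} {G : SimpleGraph V} {I : V → Seg} {a b c d x y : V}

theorem inter_nonempty (hI : IsB0Rep G I) (h : G.Adj x y) :
    ((I x).set ∩ (I y).set).Nonempty :=
  (hI x y h.ne).1 h

theorem not_inter_nonempty (hI : IsB0Rep G I) (hne : x ≠ y) (h : ¬G.Adj x y) :
    ¬((I x).set ∩ (I y).set).Nonempty :=
  mt (hI x y hne).2 h

theorem line_eq_of_isDiamondDiagonal (hI : IsB0Rep G I) (h : IsDiamondDiagonal G x y) :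
    (I x).line = (I y).line := by
  obtain ⟨hxy, u, w, huw, -, -, -, -, hnuw, hux, huy, hwx, hwy⟩ := h
  exact Seg.line_eq_of_diamond (hI.inter_nonempty hxy)
    (hI.inter_nonempty hux) (hI.inter_nonempty huy) (hI.inter_nonempty hwx)
    (hI.inter_nonempty hwy) (hI.not_inter_nonempty huw hnuw)

theorem line_eq_of_diamondRelated (hI : IsB0Rep G I) (h : DiamondRelated G x y) :
    (I x).line = (I y).line :=
  Relation.reflTransGen_eq_self (r := @Eq (Bool × ℝ)) ▸
    Relation.ReflTransGen.lift _ (fun _ _ hd => hI.line_eq_of_isDiamondDiagonal hd) x y h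

theorem line_ne_of_isInducedC4 (hI : IsB0Rep G I) (h : IsInducedC4 G a b c d)
    (hx : x = d ∨ x = a) (hy : y = b ∨ y = c) : (I x).line ≠ (I y).line := by
  obtain ⟨-, hac, -, -, hbd, -, hab, hbc, hcd, hda, nac, nbd⟩ := h
  obtain ⟨p, hpd, hpa⟩ := hI.inter_nonempty hda
  obtain ⟨q, hqb, hqc⟩ := hI.inter_nonempty hbc
  have hpx : p ∈ (I x).set := by rcases hx with rfl | rfl <;> assumption
  have hqy : q ∈ (I y).set := by rcases hy with rfl | rfl <;> assumption
  exact fun hxy => Seg.not_axisAligned_of_cycle (hI.inter_nonempty hab) (hI.inter_nonempty hcd)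
    (hI.not_inter_nonempty hac nac) (hI.not_inter_nonempty hbd nbd) hpd hpa hqb hqc
    (Seg.axisAligned_of_line_eq hxy hpx hqy)

theorem noC4DiamondRelated (hI : IsB0Rep G I) : NoC4DiamondRelated G := by
  intro a b c d h x hx y hy hxy hrel
  have hline := hI.line_eq_of_diamondRelated hrel
  have h₁ := fun x y => hI.line_ne_of_isInducedC4 (x := x) (y := y) h
  have h₂ := fun x y => hI.line_ne_of_isInducedC4 (x := x) (y := y) h.rotate
  simp only [Set.mem_insert_iff, Set.mem_singleton_iff] at hx hy
  grind

theorem c6barFree (hI : IsB0Rep G I) : C6barFree G := by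
  rintro ⟨f, hf, hadj⟩
  refine Seg.false_of_c6bar (I ∘ f) (fun i j h => hI.inter_nonempty ((hadj i j).1 h))
    fun i => hI.not_inter_nonempty (hf.ne (by simp)) (mt (hadj i (i + 1)).2 ?_)
  exact fun h => h.2.1 (add_sub_cancel_left i 1)

end IsB0Rep

theorem B0VPG_necessary_conditions_general {V : Type*}
    (G : SimpleGraph V) (h : IsB0VPG G) :
    NoC4DiamondRelated G ∧ C6barFree G := by
  obtain ⟨I, hI⟩ := h
  exact ⟨hI.noC4DiamondRelated, hI.c6barFree⟩

theorem B0VPG_necessary_conditions {V : Type*} [Fintype V]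
    (G : SimpleGraph V) (h : IsB0VPG G) :
    NoC4DiamondRelated G ∧ C6barFree G :=
  B0VPG_necessary_conditions_general G h
end

section
/- A finite simple graph G is a cocomparability graph if and only if there exists an umbrella-free ordering of the vertices of G. -/
/-! In a cocomparability order every linear extension of the partial order is umbrella-free: an
umbrella `x < y < z` with `xz` an edge but `xy`, `yz` non-edges would make `x ≤ y ≤ z` comparable,
hence `x ≤ z`. Conversely, from an umbrella-free ordering `σ` one orders `u < v` iff `u <_σ v` and
`uv` is a non-edge; umbrella-freeness is exactly the transitivity of this relation. -/

section

variable {V : Type*} {G : SimpleGraph V}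

theorem umbrellaFree_linearExtension [PartialOrder V]
    (hG : ∀ u v : V, u ≠ v → (G.Adj u v ↔ ¬ (u ≤ v ∨ v ≤ u))) :
    UmbrellaFree G (inferInstance : LinearOrder (LinearExtension V)) := by
  have le_of_lt_of_not_adj {u v : V} (huv : toLinearExtension u < toLinearExtension v)
      (hn : ¬ G.Adj u v) : u ≤ v := by
    rcases not_not.mp (mt (hG u v huv.ne).mpr hn) with hle | hle
    · exact hle
    · exact absurd (toLinearExtension.monotone hle) huv.not_ge
  intro x y z hxy hyz hxz
  by_contra! hn
  exact (hG x z (G.ne_of_adj hxz)).mp hxz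
    (Or.inl ((le_of_lt_of_not_adj hxy hn.1).trans (le_of_lt_of_not_adj hyz hn.2)))

namespace UmbrellaFree

variable [LinearOrder V]

theorem isStrictOrder (h : UmbrellaFree G inferInstance) :
    IsStrictOrder V (fun u v => u < v ∧ ¬ G.Adj u v) := by
  refine { irrefl := fun u huu => lt_irrefl u huu.1, trans := ?_ }
  rintro u v w ⟨huv, nuv⟩ ⟨hvw, nvw⟩
  exact ⟨huv.trans hvw, fun huw => (h u v w huv hvw huw).elim nuv nvw⟩

abbrev partialOrder (h : UmbrellaFree G inferInstance) : PartialOrder V :=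
  @partialOrderOfSO V _ h.isStrictOrder

theorem adj_iff_not_comparable (h : UmbrellaFree G inferInstance) (u v : V) (huv : u ≠ v) :
    G.Adj u v ↔ ¬ (h.partialOrder.le u v ∨ h.partialOrder.le v u) := by
  show G.Adj u v ↔ ¬ ((u = v ∨ u < v ∧ ¬ G.Adj u v) ∨ (v = u ∨ v < u ∧ ¬ G.Adj v u))
  constructor
  · rintro hadj ((huv' | ⟨-, hn⟩) | (hvu | ⟨-, hn⟩))
    exacts [huv huv', hn hadj, huv hvu.symm, hn hadj.symm]
  · intro hcomp
    by_contra hn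
    rcases huv.lt_or_gt with hlt | hgt
    · exact hcomp (Or.inl (Or.inr ⟨hlt, hn⟩))
    · exact hcomp (Or.inr (Or.inr ⟨hgt, fun h => hn h.symm⟩))

end UmbrellaFree

end

theorem cocomparability_iff_umbrellaFree_general {V : Type*}
    (G : SimpleGraph V) :
    IsCocomparability G ↔ ∃ σ : LinearOrder V, UmbrellaFree G σ := by
  constructor
  · rintro ⟨P, hP⟩
    let _ := P
    exact ⟨_, umbrellaFree_linearExtension hP⟩
  · rintro ⟨σ, hσ⟩
    let _ := σ
    exact ⟨hσ.partialOrder, hσ.adj_iff_not_comparable⟩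

theorem cocomparability_iff_umbrellaFree {V : Type*} [Fintype V]
    (G : SimpleGraph V) :
    IsCocomparability G ↔ ∃ σ : LinearOrder V, UmbrellaFree G σ :=
  cocomparability_iff_umbrellaFree_general G
end

section
/- If σ is an umbrella-free ordering of a finite simple graph G, then σ has no forbidden triple: there is no triple of vertices u <_σ v <_σ w such that some path in G from u to w avoids the closed neighborhood of v. -/
/-! A walk from below `v` to above `v` in `σ` must cross `v`: some edge `ab` of it has `a <_σ v ≤_σ b`.
Either `b = v`, or `ab` spans `v` and umbrella-freeness puts `a` or `b` next to `v`. -/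

theorem UmbrellaFree.exists_mem_support_eq_or_adj {V : Type*} {G : SimpleGraph V}
    {σ : LinearOrder V} (h : UmbrellaFree G σ) {u v w : V} (p : G.Walk u w)
    (huv : σ.lt u v) (hvw : σ.lt v w) : ∃ x ∈ p.support, x = v ∨ G.Adj x v := by
  let _ := σ
  obtain ⟨d, hd, hfst, hsnd⟩ := p.exists_boundary_dart {x | x < v} huv (not_lt.2 hvw.le)
  have hfst_mem := p.dart_fst_mem_support_of_mem_darts hd
  have hsnd_mem := p.dart_snd_mem_support_of_mem_darts hd
  rcases (not_lt.1 hsnd).eq_or_lt with hsnd_eq | hsnd_gt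
  · exact ⟨d.snd, hsnd_mem, Or.inl hsnd_eq.symm⟩
  · rcases h _ _ _ hfst hsnd_gt d.adj with hadj | hadj
    · exact ⟨d.fst, hfst_mem, Or.inr hadj⟩
    · exact ⟨d.snd, hsnd_mem, Or.inr hadj.symm⟩

theorem umbrellaFree_no_forbidden_triple_general {V : Type*}
    (G : SimpleGraph V) (σ : LinearOrder V) (h : UmbrellaFree G σ) :
    ¬ ∃ (u v w : V) (p : G.Walk u w), σ.lt u v ∧ σ.lt v w ∧ p.IsPath ∧
        ∀ x ∈ p.support, x ≠ v ∧ ¬ G.Adj x v := by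
  rintro ⟨u, v, w, p, huv, hvw, -, havoid⟩
  obtain ⟨x, hx, hxv⟩ := h.exists_mem_support_eq_or_adj p huv hvw
  exact hxv.elim (havoid x hx).1 (havoid x hx).2

theorem umbrellaFree_no_forbidden_triple {V : Type*} [Fintype V]
    (G : SimpleGraph V) (σ : LinearOrder V) (h : UmbrellaFree G σ) :
    ¬ ∃ (u v w : V) (p : G.Walk u w), σ.lt u v ∧ σ.lt v w ∧ p.IsPath ∧
        ∀ x ∈ p.support, x ≠ v ∧ ¬ G.Adj x v :=
  umbrellaFree_no_forbidden_triple_general G σ h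
end

section
/- Cocomparability is preserved under edge contraction: if G is a finite cocomparability graph and xy is an edge of G, then the graph G/xy obtained by contracting xy — the graph on the vertex set V(G) ∖ {y} in which distinct vertices a, b are adjacent iff ab is an edge of G, or a = x and by is an edge of G, or b = x and ay is an edge of G — is a cocomparability graph. -/
/-- The graph obtained from `G` by contracting the edge `xy` onto `x`. -/
def contractEdge {V : Type*} (G : SimpleGraph V) (x y : V) :
    SimpleGraph {v : V // v ≠ y} where
  Adj a b := a ≠ b ∧ (G.Adj a.1 b.1 ∨ (a.1 = x ∧ G.Adj b.1 y) ∨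
    (b.1 = x ∧ G.Adj a.1 y))
  symm := by
    constructor
    rintro a b ⟨hne, h⟩
    refine ⟨hne.symm, ?_⟩
    rcases h with h | ⟨h1, h2⟩ | ⟨h1, h2⟩
    · exact Or.inl h.symm
    · exact Or.inr (Or.inr ⟨h1, h2⟩)
    · exact Or.inr (Or.inl ⟨h1, h2⟩)
  loopless := by
    constructor
    rintro a ⟨hne, -⟩
    exact hne rfl

/-!
Let `P` be a partial order whose incomparability graph is `G`. Contracting `xy` merges the
`P`-antichain `{x, y}` into one vertex, and we order the merged vertices blockwise: one block lies
below another when every element of the first lies below every element of the second. Two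
blocks with no `G`-edge between them have all their elements pairwise comparable, and since the
blocks are antichains this already forces one block entirely below the other. So two contracted
vertices are adjacent exactly when they are incomparable in the block order.
-/

open Function

section BlockOrder

variable {V W : Type*} [PartialOrder V] (f : V → W)

def BlockLE (a b : W) : Prop :=
  a = b ∨ ∀ u v, f u = a → f v = b → u ≤ v

/-- Surjectivity keeps the fibres nonempty, which transitivity needs. -/
@[reducible] def blockOrder (hf : Surjective f) : PartialOrder W where
  le := BlockLE f
  le_refl _ := Or.inl rfl
  le_trans a b c := by
    rintro (rfl | hab) (rfl | hbc)
    · exact Or.inl rfl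
    · exact Or.inr hbc
    · exact Or.inr hab
    · obtain ⟨w, rfl⟩ := hf b
      exact Or.inr fun u v hu hv => (hab u w hu rfl).trans (hbc w v rfl hv)
  le_antisymm a b := by
    rintro (rfl | hab) (h | hba)
    · rfl
    · rfl
    · exact h.symm
    · obtain ⟨u, rfl⟩ := hf a
      obtain ⟨v, rfl⟩ := hf b
      rw [le_antisymm (hab u v rfl rfl) (hba v u rfl rfl)]

variable {f}

theorem blockLE_of_fibre_le (hanti : ∀ u u', f u = f u' → u ≤ u' → u = u')
    {a b : W} (hab : a ≠ b) (hcomp : ∀ u v, f u = a → f v = b → u ≤ v ∨ v ≤ u)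
    {u₀ v₀ : V} (hu₀ : f u₀ = a) (hv₀ : f v₀ = b) (h₀ : u₀ ≤ v₀) : BlockLE f a b := by
  have squeeze : ∀ {u v u'}, f u = f u' → u ≤ v → v ≤ u' → f v = f u := by
    intro u v u' hf huv hvu'
    rw [le_antisymm hvu' (hanti u u' hf (huv.trans hvu') ▸ huv), hf]
  have below_v₀ : ∀ u, f u = a → u ≤ v₀ := fun u hu =>
    (hcomp u v₀ hu hv₀).resolve_right fun hv₀u =>
      hab (hu₀ ▸ hv₀ ▸ squeeze (hu₀.trans hu.symm) h₀ hv₀u).symm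
  refine Or.inr fun u v hu hv => (hcomp u v hu hv).resolve_right fun hvu =>
    hab (hu ▸ hv ▸ squeeze (hv.trans hv₀.symm) hvu (below_v₀ u hu))

theorem blockLE_total_of_comparable (hf : Surjective f)
    (hanti : ∀ u u', f u = f u' → u ≤ u' → u = u') {a b : W} (hab : a ≠ b)
    (hcomp : ∀ u v, f u = a → f v = b → u ≤ v ∨ v ≤ u) : BlockLE f a b ∨ BlockLE f b a := by
  obtain ⟨u₀, hu₀⟩ := hf a
  obtain ⟨v₀, hv₀⟩ := hf b
  rcases hcomp u₀ v₀ hu₀ hv₀ with h₀ | h₀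
  · exact Or.inl (blockLE_of_fibre_le hanti hab hcomp hu₀ hv₀ h₀)
  · exact Or.inr (blockLE_of_fibre_le hanti hab.symm
      (fun v u hv hu => (hcomp u v hu hv).symm) hv₀ hu₀ h₀)

end BlockOrder

/-- `fromRel (Relation.Map G.Adj f f)` is `G` with every fibre of `f` contracted to a vertex. -/
theorem IsCocomparability.fromRel_map {V W : Type*} {G : SimpleGraph V}
    (hG : IsCocomparability G) {f : V → W} (hf : Surjective f)
    (hclique : ∀ u u', f u = f u' → u ≠ u' → G.Adj u u') :
    IsCocomparability (SimpleGraph.fromRel (Relation.Map G.Adj f f)) := by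
  obtain ⟨P, hP⟩ := hG
  let := P
  have hanti : ∀ u u', f u = f u' → u ≤ u' → u = u' := fun u u' hf huu' => by
    by_contra hne
    exact (hP u u' hne).mp (hclique u u' hf hne) (Or.inl huu')
  refine ⟨blockOrder f hf, fun a b hab => ?_⟩
  have hmap_symm : Relation.Map G.Adj f f b a ↔ Relation.Map G.Adj f f a b :=
    ⟨fun ⟨v, u, h, hv, hu⟩ => ⟨u, v, h.symm, hu, hv⟩,
      fun ⟨u, v, h, hu, hv⟩ => ⟨v, u, h.symm, hv, hu⟩⟩
  rw [SimpleGraph.fromRel_adj, hmap_symm, or_self, and_iff_right hab]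
  constructor
  · rintro ⟨u, v, huv, rfl, rfl⟩ (h | h)
    · exact (hP u v huv.ne).mp huv (Or.inl ((h.resolve_left hab) u v rfl rfl))
    · exact (hP u v huv.ne).mp huv (Or.inr ((h.resolve_left (Ne.symm hab)) v u rfl rfl))
  · intro hinc
    by_contra hnadj
    refine hinc (blockLE_total_of_comparable hf hanti hab fun u v hu hv => ?_)
    have huv : u ≠ v := by rintro rfl; exact hab (hu.symm.trans hv)
    by_contra hinc'
    exact hnadj ⟨u, v, (hP u v huv).mpr hinc', hu, hv⟩

section ContractEdge

variable {V : Type*} {x y : V}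

open Classical in
noncomputable def contractEdgeMap (hxy : x ≠ y) (v : V) : {v : V // v ≠ y} :=
  if h : v = y then ⟨x, hxy⟩ else ⟨v, h⟩

theorem adj_of_contractEdgeMap_eq {G : SimpleGraph V} (hxy : G.Adj x y) {u u' : V}
    (h : contractEdgeMap hxy.ne u = contractEdgeMap hxy.ne u') (hne : u ≠ u') : G.Adj u u' := by
  unfold contractEdgeMap at h
  split_ifs at h with hu hu' hu' <;> simp only [Subtype.mk.injEq] at h <;> subst_vars
  exacts [absurd rfl hne, hxy.symm, hxy, absurd rfl hne]

theorem contractEdgeMap_eq_iff (hxy : x ≠ y) {u : V} {a : {v : V // v ≠ y}} :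
    contractEdgeMap hxy u = a ↔ u = a.1 ∨ (a.1 = x ∧ u = y) := by
  unfold contractEdgeMap
  split_ifs with h <;> rw [Subtype.ext_iff] <;> grind

theorem contractEdgeMap_surjective (hxy : x ≠ y) : Surjective (contractEdgeMap hxy) :=
  fun a => ⟨a.1, (contractEdgeMap_eq_iff hxy).mpr (Or.inl rfl)⟩

theorem contractEdge_eq_fromRel_map (G : SimpleGraph V) (hxy : x ≠ y) :
    contractEdge G x y = SimpleGraph.fromRel (Relation.Map G.Adj (contractEdgeMap hxy)
      (contractEdgeMap hxy)) := by
  ext a b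
  simp only [contractEdge, SimpleGraph.fromRel_adj, Relation.Map, contractEdgeMap_eq_iff]
  refine and_congr_right fun hab => ⟨?_, ?_⟩
  · rintro (h | ⟨hax, h⟩ | ⟨hbx, h⟩)
    · exact Or.inl ⟨a, b, h, Or.inl rfl, Or.inl rfl⟩
    · exact Or.inr ⟨b, y, h, Or.inl rfl, Or.inr ⟨hax, rfl⟩⟩
    · exact Or.inl ⟨a, y, h, Or.inl rfl, Or.inr ⟨hbx, rfl⟩⟩
  · rintro (⟨u, v, h, rfl | ⟨hax, hu⟩, rfl | ⟨hbx, hv⟩⟩ |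
      ⟨u, v, h, rfl | ⟨hbx, hu⟩, rfl | ⟨hax, hv⟩⟩)
    · exact Or.inl h
    · exact Or.inr (Or.inr ⟨hbx, hv ▸ h⟩)
    · exact Or.inr (Or.inl ⟨hax, hu ▸ h.symm⟩)
    · exact (h.ne (hu.trans hv.symm)).elim
    · exact Or.inl h.symm
    · exact Or.inr (Or.inl ⟨hax, hv ▸ h⟩)
    · exact Or.inr (Or.inr ⟨hbx, hu ▸ h.symm⟩)
    · exact (h.ne (hu.trans hv.symm)).elim

end ContractEdge

theorem cocomparability_contractEdge_general {V : Type*}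
    (G : SimpleGraph V) (hG : IsCocomparability G) (x y : V)
    (hxy : G.Adj x y) :
    IsCocomparability (contractEdge G x y) := by
  rw [contractEdge_eq_fromRel_map G hxy.ne]
  exact hG.fromRel_map (contractEdgeMap_surjective hxy.ne) fun _ _ =>
    adj_of_contractEdgeMap_eq hxy

theorem cocomparability_contractEdge {V : Type*} [Fintype V]
    (G : SimpleGraph V) (hG : IsCocomparability G) (x y : V)
    (hxy : G.Adj x y) :
    IsCocomparability (contractEdge G x y) :=
  cocomparability_contractEdge_general G hG x y hxy
end

section
/- Let G be a finite cocomparability graph with a branch partition 𝒫, and let B₁ and B₂ be two adjacent parts of 𝒫. Then B_{1,2} ∪ B_{2,1} induces a clique in G. -/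
/-- A branch partition of `G`: a partition of the vertex set into connected
parts such that both endpoints of every diamond diagonal lie in the same part
and no part contains two distinct vertices of a common induced `C₄`. -/
def IsBranchPartition {V : Type*} (G : SimpleGraph V) (P : Set (Set V)) : Prop :=
  (∀ B ∈ P, B.Nonempty) ∧
  (∀ B ∈ P, ∀ B' ∈ P, B ≠ B' → Disjoint B B') ∧
  (∀ v : V, ∃ B ∈ P, v ∈ B) ∧
  (∀ B ∈ P, (SimpleGraph.induce B G).Connected) ∧
  (∀ x y : V, IsDiamondDiagonal G x y → ∀ B ∈ P, x ∈ B → y ∈ B) ∧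
  (∀ a b c d : V, IsInducedC4 G a b c d → ∀ B ∈ P,
     ∀ x ∈ ({a, b, c, d} : Set V), ∀ y ∈ ({a, b, c, d} : Set V),
       x ≠ y → x ∈ B → y ∉ B)

/-- Two parts are adjacent if some edge of `G` has one endpoint in each. -/
def PartsAdjacent {V : Type*} (G : SimpleGraph V) (B B' : Set V) : Prop :=
  ∃ u ∈ B, ∃ v ∈ B', G.Adj u v

/-- `Bset G Bi Bj` is the set of vertices of `Bi` having a neighbor in `Bj`. -/
def Bset {V : Type*} (G : SimpleGraph V) (Bi Bj : Set V) : Set V :=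
  {v ∈ Bi | ∃ u ∈ Bj, G.Adj v u}

/-!
Fix a transitive orientation of the complement of `G`. Consecutive vertices of a path are
incomparable, so a vertex with no neighbour on a path lies on one side of all of it. Along an
induced cycle `w, p 0, …, p k` with `k ≥ 3` this forces `p 0 < p k` and, reading the cycle
backwards, `p k < p 0`: a cocomparability graph has no induced cycle of length at least five.

Let `w` lie outside a part `B`. On an induced path inside `B`, the neighbours of `w` are at most
two consecutive vertices: a gap would close an induced `C₄` with two vertices in `B` or a longer
induced cycle, and three consecutive neighbours would give a diamond diagonal leaving `B`. Hence
the neighbours of `w` in `B` form a clique.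

For non-adjacent `x ∈ B_{1,2}` and `y ∈ B_{2,1}`, take a shortest path in `B2` from the
neighbourhood of `x` to `y`, of minimal length over all such pairs, and a shortest path in `B1`
from the neighbourhood of `y` to `x`. Minimality and the clique property leave at most one chord,
and the two paths close up to an induced cycle of length at least four with two consecutive
vertices in `B1`, or to a diamond whose diagonal joins `B1` to `B2`. Two vertices of `B_{1,2}`
are then both adjacent to a neighbour of one of them in `B2`, hence to each other.
-/

section

variable {V : Type*} {G : SimpleGraph V}

/-- `p 0, …, p k` is an induced path of `G`. -/
structure IsInducedPath (G : SimpleGraph V) (p : ℕ → V) (k : ℕ) : Prop where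
  adj : ∀ i < k, G.Adj (p i) (p (i + 1))
  not_adj : ∀ i j, i + 2 ≤ j → j ≤ k → ¬ G.Adj (p i) (p j)
  injOn : Set.InjOn p (Set.Iic k)

namespace IsInducedPath

variable {p q : ℕ → V} {k m t : ℕ}

lemma ne (h : IsInducedPath G p k) {i j : ℕ} (hi : i ≤ k) (hj : j ≤ k) (hij : i ≠ j) :
    p i ≠ p j :=
  fun e => hij (h.injOn hi hj e)

lemma take (h : IsInducedPath G p k) {j : ℕ} (hj : j ≤ k) : IsInducedPath G p j where
  adj i hi := h.adj i (by omega)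
  not_adj i i' hii' hi' := h.not_adj i i' hii' (by omega)
  injOn _ hi _ hi' := h.injOn (le_trans hi hj) (le_trans hi' hj)

lemma drop (h : IsInducedPath G p k) {i : ℕ} (hi : i ≤ k) :
    IsInducedPath G (fun n => p (i + n)) (k - i) where
  adj n hn := h.adj (i + n) (by omega)
  not_adj n n' hnn' hn' := h.not_adj (i + n) (i + n') (by omega) (by omega)
  injOn n hn n' hn' e := by
    simp only [Set.mem_Iic] at hn hn'
    have := h.injOn (show i + n ≤ k by omega) (show i + n' ≤ k by omega) e
    omega

lemma reverse (h : IsInducedPath G p k) : IsInducedPath G (fun n => p (k - n)) k where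
  adj n hn := by
    simpa only [show k - n = k - (n + 1) + 1 by omega] using (h.adj (k - (n + 1)) (by omega)).symm
  not_adj n n' hnn' hn' hadj := h.not_adj (k - n') (k - n) (by omega) (by omega) hadj.symm
  injOn n hn n' hn' e := by
    have := h.injOn (show k - n ≤ k by simp) (show k - n' ≤ k by simp) e
    simp only [Set.mem_Iic] at hn hn'
    omega

lemma append (hp : IsInducedPath G p m) (hq : IsInducedPath G q t) (hjoin : G.Adj (p m) (q 0))
    (hcross : ∀ i ≤ m, ∀ j ≤ t, i < m ∨ 0 < j → ¬ G.Adj (p i) (q j))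
    (hne : ∀ i ≤ m, ∀ j ≤ t, p i ≠ q j) :
    IsInducedPath G (fun n => if n ≤ m then p n else q (n - m - 1)) (m + t + 1) where
  adj n hn := by
    split_ifs with h₁ h₂ h₂
    · exact hp.adj n (by omega)
    · obtain rfl : n = m := by omega
      simpa using hjoin
    · omega
    · simpa only [show n + 1 - m - 1 = n - m - 1 + 1 by omega] using hq.adj (n - m - 1) (by omega)
  not_adj i j hij hj := by
    split_ifs with h₁ h₂ h₂
    · exact hp.not_adj i j hij h₂
    · exact hcross i h₁ (j - m - 1) (by omega) (by omega)
    · omega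
    · exact hq.not_adj (i - m - 1) (j - m - 1) (by omega) (by omega)
  injOn i hi j hj e := by
    simp only [Set.mem_Iic] at hi hj e
    split_ifs at e with h₁ h₂ h₂
    · exact hp.injOn h₁ h₂ e
    · exact absurd e (hne i h₁ (j - m - 1) (by omega))
    · exact absurd e.symm (hne j h₂ (i - m - 1) (by omega))
    · have := hq.injOn (show i - m - 1 ≤ t by omega) (show j - m - 1 ≤ t by omega) e
      omega

end IsInducedPath

/-- `w, p 0, …, p k` is an induced cycle of `G`, of length `k + 2`. -/
structure IsInducedCycle (G : SimpleGraph V) (w : V) (p : ℕ → V) (k : ℕ) : Prop where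
  path : IsInducedPath G p k
  adj_first : G.Adj w (p 0)
  adj_last : G.Adj w (p k)
  not_adj : ∀ m, 0 < m → m < k → ¬ G.Adj w (p m)
  ne : ∀ m ≤ k, w ≠ p m

namespace IsInducedCycle

variable {w : V} {p : ℕ → V} {k : ℕ}

lemma reverse (h : IsInducedCycle G w p k) : IsInducedCycle G w (fun n => p (k - n)) k where
  path := h.path.reverse
  adj_first := by simpa using h.adj_last
  adj_last := by simpa using h.adj_first
  not_adj n hn hnk := h.not_adj (k - n) (by omega) (by omega)
  ne n _ := h.ne (k - n) (by omega)

lemma isInducedC4 (h : IsInducedCycle G w p 2) : IsInducedC4 G w (p 0) (p 1) (p 2) :=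
  ⟨h.ne 0 (by omega), h.ne 1 (by omega), h.ne 2 le_rfl, h.path.ne (by omega) (by omega) (by omega),
    h.path.ne (by omega) (by omega) (by omega), h.path.ne (by omega) (by omega) (by omega),
    h.adj_first, h.path.adj 0 (by omega), h.path.adj 1 (by omega), h.adj_last.symm,
    h.not_adj 1 (by omega) (by omega), h.path.not_adj 0 2 le_rfl le_rfl⟩

end IsInducedCycle

lemma SimpleGraph.Walk.isInducedPath_getVert_of_length_eq_dist {W : Type*} {H : SimpleGraph W}
    {u v : W} (w : H.Walk u v) (hw : w.length = H.dist u v) :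
    IsInducedPath H w.getVert w.length where
  adj _ hi := w.adj_getVert_succ hi
  not_adj i j hij hj hadj := by
    have := H.dist_le ((w.take i).append (.cons hadj (w.drop j)))
    simp only [SimpleGraph.Walk.length_append, SimpleGraph.Walk.take_length,
      SimpleGraph.Walk.length_cons, SimpleGraph.Walk.drop_length] at this
    omega
  injOn := (w.isPath_of_length_eq_dist hw).getVert_injOn

lemma IsInducedPath.of_induce {B : Set V} {p : ℕ → B} {k : ℕ}
    (h : IsInducedPath (G.induce B) p k) : IsInducedPath G (fun i => (p i : V)) k where
  adj := h.adj
  not_adj := h.not_adj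
  injOn := Subtype.val_injective.comp_injOn h.injOn

lemma exists_isInducedPath {B : Set V} (hB : (G.induce B).Connected) {a b : V} (ha : a ∈ B)
    (hb : b ∈ B) : ∃ k p, IsInducedPath G p k ∧ (∀ i ≤ k, p i ∈ B) ∧ p 0 = a ∧ p k = b := by
  obtain ⟨w, hw⟩ := hB.exists_walk_length_eq_dist ⟨a, ha⟩ ⟨b, hb⟩
  exact ⟨w.length, _, (w.isInducedPath_getVert_of_length_eq_dist hw).of_induce,
    fun i _ => (w.getVert i).2, by simp, by simp⟩

lemma exists_isInducedPath_of_adj {B : Set V} (hB : (G.induce B).Connected) {v b : V}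
    (hv : ∃ u ∈ B, G.Adj v u) (hb : b ∈ B) :
    ∃ k p, IsInducedPath G p k ∧ (∀ i ≤ k, p i ∈ B) ∧ G.Adj v (p 0) ∧ p k = b ∧
      ∀ i, 0 < i → i ≤ k → ¬ G.Adj v (p i) := by
  classical
  have hex : ∃ k p, IsInducedPath G p k ∧ (∀ i ≤ k, p i ∈ B) ∧ G.Adj v (p 0) ∧ p k = b := by
    obtain ⟨u, hu, hvu⟩ := hv
    obtain ⟨k, p, hp, hpB, rfl, hpk⟩ := exists_isInducedPath hB hu hb
    exact ⟨k, p, hp, hpB, hvu, hpk⟩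
  obtain ⟨p, hp, hpB, hvp, hpk⟩ := Nat.find_spec hex
  refine ⟨_, p, hp, hpB, hvp, hpk, fun i hi hik hvi => Nat.find_min hex (m := Nat.find hex - i)
    (by omega) ⟨_, hp.drop hik, fun n hn => hpB _ (by omega), by simpa using hvi, ?_⟩⟩
  simpa [show i + (Nat.find hex - i) = Nat.find hex by omega] using hpk

/-- `r` is a transitive orientation of the complement of `G`. A bare relation rather than a
`PartialOrder` lets the order be reversed by `flip` without changing the vertex type. -/
structure IsTransOrientationCompl (G : SimpleGraph V) (r : V → V → Prop) : Prop where
  trans : ∀ {a b c}, r a b → r b c → r a c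
  irrefl : ∀ a, ¬ r a a
  not_adj : ∀ {a b}, r a b → ¬ G.Adj a b
  total : ∀ {a b}, a ≠ b → ¬ G.Adj a b → r a b ∨ r b a

namespace IsTransOrientationCompl

variable {r : V → V → Prop} {w : V} {p : ℕ → V} {k : ℕ}

lemma flip (hr : IsTransOrientationCompl G r) : IsTransOrientationCompl G (flip r) where
  trans hab hbc := hr.trans hbc hab
  irrefl := hr.irrefl
  not_adj hab hadj := hr.not_adj hab hadj.symm
  total hne hnadj := (hr.total hne hnadj).symm

lemma rel_of_rel_of_path (hr : IsTransOrientationCompl G r) {v : V} {a b : ℕ}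
    (hadj : ∀ i, a ≤ i → i < b → G.Adj (p i) (p (i + 1)))
    (hne : ∀ i, a ≤ i → i ≤ b → v ≠ p i) (hnadj : ∀ i, a ≤ i → i ≤ b → ¬ G.Adj v (p i))
    (ha : r v (p a)) : ∀ i, a ≤ i → i ≤ b → r v (p i) := by
  intro i hai
  induction i, hai using Nat.le_induction with
  | base => exact fun _ => ha
  | succ i hai ih =>
    intro hib
    refine (hr.total (hne _ (by omega) hib) (hnadj _ (by omega) hib)).resolve_right fun h => ?_
    exact hr.not_adj (hr.trans h (ih (by omega))) (hadj i hai (by omega)).symm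

lemma rel_first_last (hr : IsTransOrientationCompl G r) (h : IsInducedCycle G w p k)
    (hk : 3 ≤ k) (hw : ∀ m, 0 < m → m < k → r w (p m)) : r (p 0) (p k) := by
  have h02 : r (p 0) (p 2) :=
    (hr.total (h.path.ne (by omega) (by omega) (by omega)) (h.path.not_adj 0 2 le_rfl (by omega))
      ).resolve_right fun h20 => hr.not_adj (hr.trans (hw 2 (by omega) (by omega)) h20) h.adj_first
  exact hr.rel_of_rel_of_path (fun i _ hi => h.path.adj i hi)
    (fun i hi hik => h.path.ne (by omega) hik (by omega))
    (fun i hi hik => h.path.not_adj 0 i hi hik) h02 k (by omega) le_rfl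

lemma not_isInducedCycle (hr : IsTransOrientationCompl G r) (h : IsInducedCycle G w p k)
    (hk : 3 ≤ k) : False := by
  wlog hw1 : r w (p 1) generalizing r
  · exact this hr.flip
      ((hr.total (h.ne 1 (by omega)) (h.not_adj 1 (by omega) (by omega))).resolve_left hw1)
  have hw : ∀ m, 0 < m → m < k → r w (p m) := fun m hm hmk =>
    hr.rel_of_rel_of_path (a := 1) (b := k - 1) (fun i _ hi => h.path.adj i (by omega))
      (fun i _ _ => h.ne i (by omega)) (fun i hi hik => h.not_adj i hi (by omega)) hw1 m hm
      (by omega)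
  have hk0 : r (p k) (p 0) := by
    simpa using hr.rel_first_last h.reverse hk fun m hm hmk => hw (k - m) (by omega) (by omega)
  exact hr.irrefl _ (hr.trans (hr.rel_first_last h hk hw) hk0)

end IsTransOrientationCompl

lemma IsCocomparability.exists_isTransOrientationCompl (hG : IsCocomparability G) :
    ∃ r, IsTransOrientationCompl G r := by
  obtain ⟨P, hP⟩ := hG
  refine ⟨(· < ·), lt_trans, lt_irrefl, fun hab hadj => (hP _ _ hab.ne).1 hadj (.inl hab.le),
    fun {a b} hne hnadj => ?_⟩
  have : a ≤ b ∨ b ≤ a := not_not.1 fun h => hnadj ((hP a b hne).2 h)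
  exact this.imp (lt_of_le_of_ne · hne) (lt_of_le_of_ne · hne.symm)

lemma IsCocomparability.not_isInducedCycle (hG : IsCocomparability G) {w : V} {p : ℕ → V}
    {k : ℕ} (h : IsInducedCycle G w p k) (hk : 3 ≤ k) : False :=
  let ⟨_, hr⟩ := hG.exists_isTransOrientationCompl
  hr.not_isInducedCycle h hk

lemma isDiamondDiagonal_of_adj {x y u w : V} (hxy : G.Adj x y) (huw : u ≠ w)
    (hnuw : ¬ G.Adj u w) (hux : G.Adj u x) (huy : G.Adj u y) (hwx : G.Adj w x)
    (hwy : G.Adj w y) : IsDiamondDiagonal G x y :=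
  ⟨hxy, u, w, huw, hux.ne, huy.ne, hwx.ne, hwy.ne, hnuw, hux, huy, hwx, hwy⟩

namespace IsBranchPartition

variable {P : Set (Set V)} {B B' : Set V}

lemma not_mem_of_mem (hP : IsBranchPartition G P) (hB : B ∈ P) (hB' : B' ∈ P) (hne : B ≠ B')
    {x : V} (hx : x ∈ B) : x ∉ B' :=
  Set.disjoint_left.1 (hP.2.1 B hB B' hB' hne) hx

lemma connected (hP : IsBranchPartition G P) (hB : B ∈ P) : (G.induce B).Connected :=
  hP.2.2.2.1 B hB

lemma mem_of_isDiamondDiagonal (hP : IsBranchPartition G P) {x y : V}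
    (hxy : IsDiamondDiagonal G x y) (hB : B ∈ P) (hx : x ∈ B) : y ∈ B :=
  hP.2.2.2.2.1 x y hxy B hB hx

lemma false_of_isInducedCycle (hG : IsCocomparability G) (hP : IsBranchPartition G P)
    {w : V} {p : ℕ → V} {k : ℕ} (h : IsInducedCycle G w p k) (hk : 2 ≤ k) (hB : B ∈ P)
    {i j : ℕ} (hi : i ≤ 2) (hj : j ≤ 2) (hij : i ≠ j) (hpi : p i ∈ B) (hpj : p j ∈ B) :
    False := by
  obtain rfl : k = 2 := le_antisymm (not_lt.1 fun hk' => hG.not_isInducedCycle h hk') hk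
  refine hP.2.2.2.2.2 _ _ _ _ h.isInducedC4 B hB (p i) ?_ (p j) ?_ (h.path.ne hi hj hij) hpi hpj
  · interval_cases i <;> simp
  · interval_cases j <;> simp

lemma not_adj_of_isInducedPath (hG : IsCocomparability G) (hP : IsBranchPartition G P)
    (hB : B ∈ P) {w : V} (hw : w ∉ B) {p : ℕ → V} {k : ℕ} (hp : IsInducedPath G p k)
    (hpB : ∀ i ≤ k, p i ∈ B) {i j : ℕ} (hij : i + 2 ≤ j) (hjk : j ≤ k)
    (hwi : G.Adj w (p i)) : ¬ G.Adj w (p j) := by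
  induction hd : j - i using Nat.strong_induction_on generalizing i j with
  | _ d ih =>
    intro hwj
    by_cases hmid : ∃ m, i < m ∧ m < j ∧ G.Adj w (p m)
    · obtain ⟨m, him, hmj, hwm⟩ := hmid
      by_cases him' : i + 2 ≤ m
      · exact ih (m - i) (by omega) him' (by omega) hwi rfl hwm
      by_cases hmj' : m + 2 ≤ j
      · exact ih (j - m) (by omega) hmj' hjk hwm rfl hwj
      obtain rfl : m = i + 1 := by omega
      obtain rfl : j = i + 2 := by omega
      refine hw (hP.mem_of_isDiamondDiagonal ?_ hB (hpB (i + 1) (by omega)))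
      exact isDiamondDiagonal_of_adj hwm.symm (hp.ne (by omega) (by omega) (by omega))
        (hp.not_adj i (i + 2) le_rfl hjk) (hp.adj i (by omega)) hwi.symm
        (hp.adj (i + 1) (by omega)).symm hwj.symm
    · push Not at hmid
      have hcyc : IsInducedCycle G w (fun n => p (i + n)) (j - i) :=
        { path := (hp.take hjk).drop (by omega)
          adj_first := hwi
          adj_last := by simpa [show i + (j - i) = j by omega] using hwj
          not_adj := fun n hn hnj => hmid (i + n) (by omega) (by omega)
          ne := fun n hn h => hw (h ▸ hpB (i + n) (by omega)) }
      exact hP.false_of_isInducedCycle hG hcyc (by omega) hB (i := 0) (j := 2) (by omega) le_rfl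
        (by omega) (hpB _ (by omega)) (hpB _ (by omega))

lemma isClique_neighborSet_inter (hG : IsCocomparability G) (hP : IsBranchPartition G P)
    (hB : B ∈ P) {w : V} (hw : w ∉ B) : G.IsClique (G.neighborSet w ∩ B) := by
  rintro a ⟨hwa, ha⟩ b ⟨hwb, hb⟩ hab
  by_contra hnab
  obtain ⟨k, p, hp, hpB, rfl, rfl⟩ := exists_isInducedPath (hP.connected hB) ha hb
  have hk : 2 ≤ k := by
    by_contra hk
    interval_cases k
    · exact hab rfl
    · exact hnab (hp.adj 0 zero_lt_one)
  exact hP.not_adj_of_isInducedPath hG hB hw hp hpB hk le_rfl hwa hwb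

end IsBranchPartition

/-- `x ∈ B_{1,2}` and `q t ∈ B_{2,1}` are non-adjacent, and `q` is an induced path in `B2` from
a neighbour of `x` that meets the neighbourhood of `x` only in `q 0`. -/
def CrossConfig (G : SimpleGraph V) (B1 B2 : Set V) (t : ℕ) : Prop :=
  ∃ (x : V) (q : ℕ → V), x ∈ B1 ∧ IsInducedPath G q t ∧ (∀ j ≤ t, q j ∈ B2) ∧
    q t ∈ Bset G B2 B1 ∧ G.Adj x (q 0) ∧ 0 < t ∧ ∀ j, 0 < j → j ≤ t → ¬ G.Adj x (q j)

namespace IsBranchPartition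

variable {P : Set (Set V)} {B1 B2 : Set V}

lemma false_of_isInducedCycle_across (hG : IsCocomparability G) (hP : IsBranchPartition G P)
    (h1 : B1 ∈ P) (h2 : B2 ∈ P) (hne : B1 ≠ B2) {p q : ℕ → V} {m t : ℕ}
    (hp : IsInducedPath G p m) (hpB : ∀ i ≤ m, p i ∈ B1) (hq : IsInducedPath G q t)
    (hqB : ∀ j ≤ t, q j ∈ B2) (hm : 0 < m) (ht : 0 < t) (hjoin : G.Adj (p m) (q 0))
    (hclose : G.Adj (q t) (p 0)) (hq0 : ∀ i < m, ¬ G.Adj (q 0) (p i))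
    (hqj : ∀ v ∈ B1, ∀ j, 0 < j → j < t → ¬ G.Adj (q j) v)
    (hqt : ∀ i, 0 < i → i ≤ m → ¬ G.Adj (q t) (p i)) : False := by
  have hpq : ∀ i ≤ m, ∀ j ≤ t, p i ≠ q j := fun i hi j hj e =>
    hP.not_mem_of_mem h1 h2 hne (hpB i hi) (e ▸ hqB j hj)
  have hcyc : IsInducedCycle G (q t) (fun n => if n ≤ m then p n else q (n - m - 1))
      (m + (t - 1) + 1) :=
    { path := hp.append (hq.take (Nat.sub_le t 1)) hjoin
        (fun i hi j hj hij hadj => by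
          rcases Nat.eq_zero_or_pos j with rfl | hj0
          · exact hq0 i (by omega) hadj.symm
          · exact hqj _ (hpB i hi) j hj0 (by omega) hadj.symm)
        (fun i hi j hj => hpq i hi j (by omega))
      adj_first := by simpa using hclose
      adj_last := by
        simpa [show m + (t - 1) + 1 - m - 1 = t - 1 by omega, show t - 1 + 1 = t by omega]
          using (hq.adj (t - 1) (by omega)).symm
      not_adj := fun n hn hnt => by
        split_ifs with hnm
        · exact hqt n hn hnm
        · exact fun h => hq.not_adj (n - m - 1) t (by omega) le_rfl h.symm
      ne := fun n hn => by
        split_ifs with hnm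
        · exact (hpq n hnm t le_rfl).symm
        · exact hq.ne le_rfl (by omega) (by omega) }
  exact hP.false_of_isInducedCycle hG hcyc (by omega) h1 (i := 0) (j := 1) (by omega)
    (by omega) (by omega) (by simpa using hpB 0 (by omega))
    (by simpa [show 1 ≤ m by omega] using hpB 1 hm)

lemma not_crossConfig (hG : IsCocomparability G) (hP : IsBranchPartition G P) (h1 : B1 ∈ P)
    (h2 : B2 ∈ P) (hne : B1 ≠ B2) (t : ℕ) : ¬ CrossConfig G B1 B2 t := by
  induction t using Nat.strong_induction_on with
  | _ t ih =>
    rintro ⟨x, q, hx, hq, hqB, ⟨-, hy⟩, hxq0, ht, hxq⟩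
    -- otherwise `x` and `q j` would be a counterexample with a shorter path
    have hqj : ∀ v ∈ B1, ∀ j, 0 < j → j < t → ¬ G.Adj (q j) v := fun v hv j hj hjt hadj =>
      ih j hjt ⟨x, q, hx, hq.take hjt.le, fun i hi => hqB i (by omega), ⟨hqB j hjt.le, v, hv, hadj⟩,
        hxq0, hj, fun i hi hij => hxq i hi (by omega)⟩
    obtain ⟨k, p, hp, hpB, hyp0, rfl, hyp⟩ := exists_isInducedPath_of_adj (hP.connected h1) hy hx
    have hk : 0 < k := Nat.pos_of_ne_zero fun hk => hxq t ht le_rfl (hk ▸ hyp0).symm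
    have hq0B1 : q 0 ∉ B1 := hP.not_mem_of_mem h2 h1 hne.symm (hqB 0 (Nat.zero_le t))
    -- the neighbours of `q 0` in `B1` form a clique containing `p k`
    have hq0 : ∀ i, i + 2 ≤ k → ¬ G.Adj (q 0) (p i) := fun i hi hadj =>
      hp.not_adj i k hi le_rfl (hP.isClique_neighborSet_inter hG h1 hq0B1 ⟨hadj, hpB i (by omega)⟩
        ⟨hxq0.symm, hpB k le_rfl⟩ (hp.ne (by omega) le_rfl (by omega)))
    by_cases hch : G.Adj (q 0) (p (k - 1))
    · rcases Nat.lt_or_ge k 2 with hk2 | hk2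
      · obtain rfl : k = 1 := by omega
        have hp0B2 : p 0 ∉ B2 := hP.not_mem_of_mem h1 h2 hne (hpB 0 (Nat.zero_le 1))
        obtain rfl : t = 1 := by
          by_contra ht1
          exact hq.not_adj 0 t (by omega) le_rfl (hP.isClique_neighborSet_inter hG h2 hp0B2
            ⟨hch.symm, hqB 0 (Nat.zero_le t)⟩ ⟨hyp0.symm, hqB t le_rfl⟩ (hq.ne (by omega) le_rfl
            (by omega)))
        -- `p 1, p 0, q 1, q 0` is a diamond whose diagonal `p 0 q 0` crosses the two parts
        refine hq0B1 (hP.mem_of_isDiamondDiagonal ?_ h1 (hpB 0 (Nat.zero_le 1)))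
        exact isDiamondDiagonal_of_adj hch.symm
          (fun e : p 1 = q 1 => hP.not_mem_of_mem h1 h2 hne (hpB 1 le_rfl) (e ▸ hqB 1 le_rfl))
          (hxq 1 one_pos le_rfl) (hp.adj 0 one_pos).symm hxq0 hyp0 (hq.adj 0 one_pos).symm
      · exact hP.false_of_isInducedCycle_across hG h1 h2 hne (hp.take (Nat.sub_le k 1))
          (fun i hi => hpB i (by omega)) hq hqB (by omega) ht hch.symm hyp0
          (fun i hi => hq0 i (by omega)) hqj (fun i hi hik => hyp i hi (by omega))
    · exact hP.false_of_isInducedCycle_across hG h1 h2 hne hp hpB hq hqB hk ht hxq0 hyp0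
        (fun i hi => by
          rcases Nat.lt_or_ge (i + 1) k with hik | hik
          · exact hq0 i (by omega)
          · rwa [show i = k - 1 by omega])
        hqj hyp

lemma adj_of_mem_bset_of_mem_bset_swap (hG : IsCocomparability G) (hP : IsBranchPartition G P)
    (h1 : B1 ∈ P) (h2 : B2 ∈ P) (hne : B1 ≠ B2) {x y : V} (hx : x ∈ Bset G B1 B2) (hy : y ∈ Bset G B2 B1) :
    G.Adj x y := by
  by_contra hxy
  obtain ⟨t, q, hq, hqB, hxq0, rfl, hxq⟩ := exists_isInducedPath_of_adj (hP.connected h2) hx.2 hy.1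
  have ht : 0 < t := Nat.pos_of_ne_zero fun ht => hxy (ht ▸ hxq0)
  exact hP.not_crossConfig hG h1 h2 hne t ⟨x, q, hx.1, hq, hqB, hy, hxq0, ht, hxq⟩

lemma isClique_bset (hG : IsCocomparability G) (hP : IsBranchPartition G P) (h1 : B1 ∈ P)
    (h2 : B2 ∈ P) (hne : B1 ≠ B2) : G.IsClique (Bset G B1 B2) := by
  rintro a ⟨ha1, a', ha', haa'⟩ b hb hab
  have hba' := hP.adj_of_mem_bset_of_mem_bset_swap hG h1 h2 hne hb ⟨ha', a, ha1, haa'.symm⟩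
  exact hP.isClique_neighborSet_inter hG h1 (hP.not_mem_of_mem h2 h1 hne.symm ha')
    ⟨haa'.symm, ha1⟩ ⟨hba'.symm, hb.1⟩ hab

end IsBranchPartition

end

theorem branch_boundary_clique_general {V : Type*}
    (G : SimpleGraph V) (hG : IsCocomparability G)
    (P : Set (Set V)) (hP : IsBranchPartition G P)
    (B1 B2 : Set V) (h1 : B1 ∈ P) (h2 : B2 ∈ P) (hne : B1 ≠ B2) :
    G.IsClique (Bset G B1 B2 ∪ Bset G B2 B1) := by
  rintro u (hu | hu) v (hv | hv) huv
  · exact hP.isClique_bset hG h1 h2 hne hu hv huv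
  · exact hP.adj_of_mem_bset_of_mem_bset_swap hG h1 h2 hne hu hv
  · exact (hP.adj_of_mem_bset_of_mem_bset_swap hG h1 h2 hne hv hu).symm
  · exact hP.isClique_bset hG h2 h1 hne.symm hu hv huv

theorem branch_boundary_clique {V : Type*} [Fintype V]
    (G : SimpleGraph V) (hG : IsCocomparability G)
    (P : Set (Set V)) (hP : IsBranchPartition G P)
    (B1 B2 : Set V) (h1 : B1 ∈ P) (h2 : B2 ∈ P) (hne : B1 ≠ B2)
    (hadj : PartsAdjacent G B1 B2) :
    G.IsClique (Bset G B1 B2 ∪ Bset G B2 B1) :=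
  branch_boundary_clique_general G hG P hP B1 B2 h1 h2 hne
end

section
/- Let G be a finite cocomparability graph with a branch partition 𝒫, and let B₀, …, B_{k−1} be distinct parts of 𝒫 with k = 3 or k = 4 such that cyclically consecutive parts are adjacent and, when k = 4, the non-consecutive pairs (B₀, B₂) and (B₁, B₃) are non-adjacent. Then for each i (indices mod k) the set B_{i,i−1} ∩ B_{i,i+1} is nonempty, and there exists an induced cycle b₀, b₁, …, b_{k−1} in G with b_i ∈ B_i for every i. -/
/-!
Delete from the graph induced on `⋃ Bᵢ` the edges between `B₀` and `B₁`; as the parts are connected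
and cyclically adjacent, `B₀` and `B₁` stay connected. Choose an edge `ab` between `B₀` and `B₁`
whose ends are closest in this graph, and a shortest path from `a` to `b`: together with `ab` it is
an induced cycle, since a chord would either shorten the path or be a closer `B₀`–`B₁` edge. In a
cocomparability graph a vertex comparable to both ends of an edge lies on the same side of both,
which rules out induced cycles on five or more vertices. So the cycle is a triangle or an induced
`C₄`, and since a part meets an induced `C₄` at most once (`k = 3`), resp. opposite parts are
non-adjacent (`k = 4`), its vertices lie in the parts in cyclic order.
-/

section Incomparable

variable {α : Type*} {r : α → α → Prop} [IsTrans α r] {a b c : α}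

lemma rel_of_incomparable_of_rel_left (hab : ¬ (r a b ∨ r b a)) (hcb : r c b ∨ r b c)
    (hca : r c a) : r c b :=
  hcb.resolve_right fun hbc => hab (Or.inr (_root_.trans hbc hca))

lemma rel_of_incomparable_of_rel_right (hab : ¬ (r a b ∨ r b a)) (hcb : r c b ∨ r b c)
    (hac : r a c) : r b c :=
  hcb.resolve_left fun hcb => hab (Or.inl (_root_.trans hac hcb))

end Incomparable

lemma Function.injective_of_mem_of_pairwise_disjoint {ι V : Type*} {B : ι → Set V} {b : ι → V}
    (hb : ∀ i, b i ∈ B i) (hdisj : Pairwise (Function.onFun Disjoint B)) : Function.Injective b :=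
  fun i j h => by_contra fun hij => Set.disjoint_left.1 (hdisj hij) (hb i) (h ▸ hb j)

namespace SimpleGraph

open Function

variable {V : Type*} {G : SimpleGraph V}

/-- `p 0, p 1, …, p m` is an induced cycle of `G` on `m + 1` vertices. -/
structure IsInducedCycle (G : SimpleGraph V) (m : ℕ) (p : ℕ → V) : Prop where
  injOn : Set.InjOn p (Set.Iic m)
  adj_iff {i j : ℕ} : i < j → j ≤ m → (G.Adj (p i) (p j) ↔ j = i + 1 ∨ i = 0 ∧ j = m)

namespace IsInducedCycle

variable {m i j : ℕ} {p : ℕ → V}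

lemma ne (hp : IsInducedCycle G m p) (hi : i ≤ m) (hj : j ≤ m) (hij : i ≠ j) : p i ≠ p j :=
  fun h => hij (hp.injOn hi hj h)

lemma adj_succ (hp : IsInducedCycle G m p) (hi : i < m) : G.Adj (p i) (p (i + 1)) :=
  (hp.adj_iff (Nat.lt_succ_self i) hi).2 (Or.inl rfl)

lemma adj_zero_last (hp : IsInducedCycle G m p) (hm : 0 < m) : G.Adj (p 0) (p m) :=
  (hp.adj_iff hm le_rfl).2 (Or.inr ⟨rfl, rfl⟩)

lemma not_adj (hp : IsInducedCycle G m p) (hij : i + 1 < j) (hj : j ≤ m) (hi : 0 < i ∨ j < m) :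
    ¬ G.Adj (p i) (p j) := by
  rw [hp.adj_iff (by omega) hj]
  omega

lemma isInducedC4 (hp : IsInducedCycle G 3 p) : IsInducedC4 G (p 0) (p 1) (p 2) (p 3) :=
  ⟨hp.ne (by omega) (by omega) (by omega), hp.ne (by omega) (by omega) (by omega),
    hp.ne (by omega) (by omega) (by omega), hp.ne (by omega) (by omega) (by omega),
    hp.ne (by omega) (by omega) (by omega), hp.ne (by omega) (by omega) (by omega),
    hp.adj_succ (by omega), hp.adj_succ (by omega), hp.adj_succ (by omega),
    (hp.adj_zero_last (by omega)).symm, hp.not_adj (by omega) (by omega) (by omega),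
    hp.not_adj (by omega) (by omega) (by omega)⟩

end IsInducedCycle

section Comparability

variable {r : V → V → Prop} [IsTrans V r]

lemma IsInducedCycle.false_of_rel [Std.Antisymm r] {m : ℕ} {p : ℕ → V}
    (hr : ∀ u v, u ≠ v → (G.Adj u v ↔ ¬ (r u v ∨ r v u)))
    (hp : IsInducedCycle G m p) (hm : 4 ≤ m) (h02 : r (p 0) (p 2)) : False := by
  have hinc {i j : ℕ} (h : G.Adj (p i) (p j)) : ¬ (r (p i) (p j) ∨ r (p j) (p i)) :=
    (hr _ _ h.ne).1 h
  have hcomp {i j : ℕ} (hij : i + 1 < j) (hj : j ≤ m) (h : 0 < i ∨ j < m) :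
      r (p i) (p j) ∨ r (p j) (p i) :=
    not_not.1 fun hn => hp.not_adj hij hj h ((hr _ _ (hp.ne (by omega) hj (by omega))).2 hn)
  have hlast : G.Adj (p (m - 1)) (p m) := by
    simpa [Nat.sub_add_cancel (by omega : 1 ≤ m)] using hp.adj_succ (i := m - 1) (by omega)
  -- `p 0` lies on the same side of every vertex of the path `p 2, …, p (m - 1)` it misses.
  have h0 : ∀ j, 2 ≤ j → j ≤ m - 1 → r (p 0) (p j) := by
    intro j hj
    induction j, hj using Nat.le_induction with
    | base => exact fun _ => h02
    | succ j hj ih =>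
      exact fun hjm => rel_of_incomparable_of_rel_left (hinc (hp.adj_succ (by omega)))
        (hcomp (by omega) (by omega) (by omega)) (ih (by omega))
  -- Going round the other way, from `p 2` via `p m` and `p 1`, puts `p (m - 1)` below `p 0` too.
  have hm2 : r (p m) (p 2) := rel_of_incomparable_of_rel_right
    (hinc (hp.adj_zero_last (by omega))) (hcomp (by omega) le_rfl (by omega)) h02
  have hm1 : r (p m) (p 1) := rel_of_incomparable_of_rel_left
    (hinc (hp.adj_succ (i := 1) (by omega)).symm) (hcomp (by omega) le_rfl (by omega)).symm hm2
  have hm11 : r (p (m - 1)) (p 1) := rel_of_incomparable_of_rel_right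
    (hinc hlast.symm) (hcomp (by omega) (by omega) (by omega)) hm1
  have hm10 : r (p (m - 1)) (p 0) := rel_of_incomparable_of_rel_left
    (hinc (hp.adj_succ (i := 0) (by omega)).symm) (hcomp (by omega) (by omega) (by omega)).symm hm11
  exact hp.ne (by omega) (by omega) (by omega : 0 ≠ m - 1)
    (antisymm (h0 (m - 1) (by omega) le_rfl) hm10)

end Comparability

lemma _root_.IsCocomparability.not_isInducedCycle_s13 (hG : IsCocomparability G) {m : ℕ} {p : ℕ → V}
    (hp : IsInducedCycle G m p) (hm : 4 ≤ m) : False := by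
  obtain ⟨P, hP⟩ := hG
  let _ := P
  have h02 : ¬ G.Adj (p 0) (p 2) := hp.not_adj (by omega) (by omega) (by omega)
  rcases not_not.1 (h02 ∘ (hP _ _ (hp.ne (by omega) (by omega) (by omega))).2) with h | h
  · exact hp.false_of_rel (r := (· ≤ ·)) hP hm h
  · exact hp.false_of_rel (r := (· ≥ ·)) (fun u v huv => (hP u v huv).trans (by rw [or_comm])) hm h

lemma Walk.dist_getVert_getVert {u v : V} (w : G.Walk u v)
    (hw : w.length = G.dist u v) {i j : ℕ} (hij : i ≤ j) (hj : j ≤ w.length) :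
    G.dist (w.getVert i) (w.getVert j) = j - i := by
  let q : G.Walk (w.getVert i) (w.getVert j) :=
    ((w.drop i).take (j - i)).copy rfl (by rw [Walk.drop_getVert, Nat.add_sub_cancel' hij])
  have hq : q.length ≤ j - i := by simp [q, Walk.take_length]
  obtain ⟨q', hq'⟩ := q.reachable.exists_walk_length_eq_dist
  -- Replacing the segment of `w` between `i` and `j` by `q'` does not shorten `w`.
  have hshort := dist_le ((w.take i).append (q'.append (w.drop j)))
  simp only [Walk.length_append, Walk.take_length, Walk.drop_length] at hshort
  have := dist_le q
  omega

/-- The graph induced by `G` on `U`, with the edges between `X` and `Y` deleted. -/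
def induceWithoutCross (G : SimpleGraph V) (U X Y : Set V) : SimpleGraph V where
  Adj x y := G.Adj x y ∧ x ∈ U ∧ y ∈ U ∧ ¬ (x ∈ X ∧ y ∈ Y ∨ x ∈ Y ∧ y ∈ X)
  symm := ⟨fun _ _ h => ⟨h.1.symm, h.2.2.1, h.2.1, by tauto⟩⟩
  loopless := ⟨fun x h => G.loopless.irrefl x h.1⟩

namespace induceWithoutCross

variable {U X Y : Set V} {x y : V}

lemma le : G.induceWithoutCross U X Y ≤ G := fun _ _ h => h.1

lemma mem_of_adj (h : (G.induceWithoutCross U X Y).Adj x y) : x ∈ U := h.2.1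

lemma not_cross (h : (G.induceWithoutCross U X Y).Adj x y) (hx : x ∈ X) (hy : y ∈ Y) : False :=
  h.2.2.2 (Or.inl ⟨hx, hy⟩)

lemma reachable_of_connected {S : Set V} (hS : (G.induce S).Connected)
    (hSU : S ⊆ U) (hSXY : Disjoint S X ∨ Disjoint S Y) (hx : x ∈ S) (hy : y ∈ S) :
    (G.induceWithoutCross U X Y).Reachable x y := by
  have hGH (u : S) (v : S) (h : G.Adj u v) : (G.induceWithoutCross U X Y).Adj u v := by
    refine ⟨h, hSU u.2, hSU v.2, ?_⟩
    rcases hSXY with hd | hd <;>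
      have := Set.disjoint_left.1 hd u.2 <;> have := Set.disjoint_left.1 hd v.2 <;> tauto
  exact (hS.preconnected ⟨x, hx⟩ ⟨y, hy⟩).map ⟨Subtype.val, hGH _ _⟩

end induceWithoutCross

lemma exists_adj_forall_dist_le (H : SimpleGraph V) {X Y : Set V}
    (hXY : ∃ a ∈ X, ∃ b ∈ Y, G.Adj a b) :
    ∃ a ∈ X, ∃ b ∈ Y, G.Adj a b ∧ ∀ x ∈ X, ∀ y ∈ Y, G.Adj x y → H.dist a b ≤ H.dist x y := by
  obtain ⟨⟨a, b⟩, ⟨ha, hb, hab⟩, hmin⟩ :=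
    (measure fun e : V × V => H.dist e.1 e.2).wf.has_min {e | e.1 ∈ X ∧ e.2 ∈ Y ∧ G.Adj e.1 e.2}
      (let ⟨a, ha, b, hb, hab⟩ := hXY; ⟨(a, b), ha, hb, hab⟩)
  exact ⟨a, ha, b, hb, hab, fun x hx y hy hxy => not_lt.1 (hmin (x, y) ⟨hx, hy, hxy⟩)⟩

theorem exists_isInducedCycle_of_cross_edge {U X Y : Set V}
    (hXY : ∃ a ∈ X, ∃ b ∈ Y, G.Adj a b)
    (hreach : ∀ a ∈ X, ∀ b ∈ Y, G.Adj a b → (G.induceWithoutCross U X Y).Reachable a b) :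
    ∃ m p, 2 ≤ m ∧ IsInducedCycle G m p ∧ p 0 ∈ X ∧ p m ∈ Y ∧
      ∀ i < m, (G.induceWithoutCross U X Y).Adj (p i) (p (i + 1)) := by
  set H := G.induceWithoutCross U X Y
  obtain ⟨a, ha, b, hb, hab, hmin⟩ := exists_adj_forall_dist_le H hXY
  obtain ⟨w, hw⟩ := (hreach a ha b hb hab).exists_walk_length_eq_dist
  set m := w.length
  have hp0 : w.getVert 0 = a := w.getVert_zero
  have hpm : w.getVert m = b := w.getVert_length
  have hcross {x y : V} (hx : x ∈ X) (hy : y ∈ Y) (hxy : G.Adj x y) : m ≤ H.dist x y :=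
    hw ▸ hmin x hx y hy hxy
  have hdist {i j : ℕ} (hij : i ≤ j) (hj : j ≤ m) : H.dist (w.getVert i) (w.getVert j) = j - i :=
    w.dist_getVert_getVert hw hij hj
  have hm : 2 ≤ m := by
    have h0 : m ≠ 0 := fun h => hab.ne (Walk.eq_of_length_eq_zero h)
    have h1 : m ≠ 1 := fun h =>
      induceWithoutCross.not_cross (dist_eq_one_iff_adj.1 (hw ▸ h)) ha hb
    omega
  have hU {i : ℕ} (hi : i ≤ m) : w.getVert i ∈ U := by
    rcases lt_or_eq_of_le hi with hi | rfl
    · exact induceWithoutCross.mem_of_adj (w.adj_getVert_succ hi)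
    · have := (w.adj_getVert_succ (i := m - 1) (by omega)).symm
      rw [Nat.sub_add_cancel (by omega)] at this
      exact induceWithoutCross.mem_of_adj this
  refine ⟨m, w.getVert, hm, ⟨fun i hi j hj hij => ?_, fun {i j} hij hj => ⟨fun h => ?_, ?_⟩⟩,
    by rw [hp0]; exact ha, by rw [hpm]; exact hb, fun i hi => w.adj_getVert_succ hi⟩
  · rcases le_total i j with h | h
    · have := hdist h hj; rw [hij, dist_self] at this; omega
    · have := hdist h hi; rw [hij, dist_self] at this; omega
  · by_contra hnot
    by_cases hH : H.Adj (w.getVert i) (w.getVert j)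
    · have := hdist hij.le hj
      rw [dist_eq_one_iff_adj.2 hH] at this
      omega
    · -- A chord outside `H` is a cross edge, closer in `H` than `ab`.
      have hXY : w.getVert i ∈ X ∧ w.getVert j ∈ Y ∨ w.getVert i ∈ Y ∧ w.getVert j ∈ X :=
        not_not.1 fun hc => hH ⟨h, hU (by omega), hU hj, hc⟩
      have := hdist hij.le hj
      rcases hXY with ⟨hx, hy⟩ | ⟨hy, hx⟩
      · have := hcross hx hy h; omega
      · have := hcross hx hy h.symm; rw [dist_comm] at this; omega
  · rintro (rfl | ⟨rfl, rfl⟩)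
    · exact induceWithoutCross.le (w.adj_getVert_succ hj)
    · rwa [hp0, hpm]

def MeetsInducedC4AtMostOnce (G : SimpleGraph V) (S : Set V) : Prop :=
  ∀ a b c d : V, IsInducedC4 G a b c d → ∀ x ∈ ({a, b, c, d} : Set V),
    ∀ y ∈ ({a, b, c, d} : Set V), x ≠ y → x ∈ S → y ∉ S

lemma MeetsInducedC4AtMostOnce.false_of_isInducedCycle {S : Set V} {p : ℕ → V} {i j : ℕ}
    (hS : G.MeetsInducedC4AtMostOnce S) (hp : G.IsInducedCycle 3 p) (hpi : p i ∈ S)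
    (hpj : p j ∈ S) (hi : i ≤ 3) (hj : j ≤ 3) (hij : i ≠ j) : False := by
  have hmem {l : ℕ} (hl : l ≤ 3) : p l ∈ ({p 0, p 1, p 2, p 3} : Set V) := by
    interval_cases l <;> simp
  exact hS _ _ _ _ hp.isInducedC4 _ (hmem hi) _ (hmem hj) (hp.ne hi hj hij) hpi hpj

theorem _root_.IsCocomparability.exists_short_isInducedCycle (hG : IsCocomparability G)
    {U X Y : Set V} (hXY : ∃ a ∈ X, ∃ b ∈ Y, G.Adj a b)
    (hreach : ∀ a ∈ X, ∀ b ∈ Y, G.Adj a b → (G.induceWithoutCross U X Y).Reachable a b) :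
    ∃ m p, (m = 2 ∨ m = 3) ∧ IsInducedCycle G m p ∧ p 0 ∈ X ∧ p m ∈ Y ∧
      ∀ i < m, (G.induceWithoutCross U X Y).Adj (p i) (p (i + 1)) := by
  obtain ⟨m, p, hm, hp, hpX, hpY, hpath⟩ := exists_isInducedCycle_of_cross_edge hXY hreach
  have hm3 : m ≤ 3 := not_lt.1 fun h => hG.not_isInducedCycle_s13 hp h
  exact ⟨m, p, by omega, hp, hpX, hpY, hpath⟩

theorem exists_triangle_of_cyclic_parts (hG : IsCocomparability G) {B : ZMod 3 → Set V}
    (hdisj : Pairwise (Disjoint on B)) (hconn : ∀ i, (G.induce (B i)).Connected)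
    (hadj : ∀ i, PartsAdjacent G (B i) (B (i + 1)))
    (hC4 : ∀ i, G.MeetsInducedC4AtMostOnce (B i)) :
    ∃ b : ZMod 3 → V, (∀ i, b i ∈ B i) ∧ ∀ i, G.Adj (b i) (b (i + 1)) := by
  set U := ⋃ i, B i
  have hU {i : ZMod 3} : B i ⊆ U := Set.subset_iUnion B i
  have hreach : ∀ a ∈ B 0, ∀ b ∈ B 1, G.Adj a b →
      (G.induceWithoutCross U (B 0) (B 1)).Reachable a b := by
    intro a ha b hb _
    obtain ⟨c, hc, a', ha', hca'⟩ : PartsAdjacent G (B 2) (B 0) := hadj 2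
    obtain ⟨b', hb', c', hc', hb'c'⟩ : PartsAdjacent G (B 1) (B 2) := hadj 1
    have h20 := connected_induce_union (hconn 2).preconnected (hconn 0).preconnected hc ha' hca'
    have h12 := connected_induce_union (hconn 1).preconnected (hconn 2).preconnected hb' hc' hb'c'
    have hd20 : Disjoint (B 2 ∪ B 0) (B 1) :=
      Set.disjoint_union_left.2 ⟨hdisj (by decide), hdisj (by decide)⟩
    have hd12 : Disjoint (B 1 ∪ B 2) (B 0) :=
      Set.disjoint_union_left.2 ⟨hdisj (by decide), hdisj (by decide)⟩
    exact (induceWithoutCross.reachable_of_connected h20 (Set.union_subset hU hU) (.inr hd20)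
      (.inr ha) (.inl hc)).trans <| induceWithoutCross.reachable_of_connected h12
        (Set.union_subset hU hU) (.inl hd12) (.inr hc) (.inl hb)
  obtain ⟨m, p, hm, hp, hp0, hpm, hpath⟩ := hG.exists_short_isInducedCycle (hadj 0) hreach
  have hpart {i : ℕ} (hi : i < m) : ∃ j, p i ∈ B j :=
    Set.mem_iUnion.1 (induceWithoutCross.mem_of_adj (hpath i hi))
  rcases hm with rfl | rfl
  · obtain ⟨j, hj⟩ := hpart (i := 1) (by omega)
    fin_cases j
    · exact (induceWithoutCross.not_cross (hpath 1 (by omega)) hj hpm).elim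
    · exact (induceWithoutCross.not_cross (hpath 0 (by omega)) hp0 hj).elim
    · refine ⟨![p 0, p 2, p 1], fun i => ?_, fun i => ?_⟩ <;> fin_cases i
      exacts [hp0, hpm, hj, hp.adj_zero_last (by omega), (hp.adj_succ (i := 1) (by omega)).symm,
        (hp.adj_succ (i := 0) (by omega)).symm]
  · exfalso
    obtain ⟨j, hj⟩ := hpart (i := 1) (by omega)
    fin_cases j
    · exact (hC4 0).false_of_isInducedCycle hp hp0 hj
        (by omega) (by omega) (by omega)
    · exact induceWithoutCross.not_cross (hpath 0 (by omega)) hp0 hj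
    · obtain ⟨j', hj'⟩ := hpart (i := 2) (by omega)
      fin_cases j'
      · exact induceWithoutCross.not_cross (hpath 2 (by omega)) hj' hpm
      · exact (hC4 1).false_of_isInducedCycle hp hj' hpm
          (by omega) (by omega) (by omega)
      · exact (hC4 2).false_of_isInducedCycle hp hj hj'
          (by omega) (by omega) (by omega)

theorem exists_square_of_cyclic_parts (hG : IsCocomparability G) {B : ZMod 4 → Set V}
    (hdisj : Pairwise (Disjoint on B)) (hconn : ∀ i, (G.induce (B i)).Connected)
    (hadj : ∀ i, PartsAdjacent G (B i) (B (i + 1)))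
    (hn02 : ¬ PartsAdjacent G (B 0) (B 2)) (hn13 : ¬ PartsAdjacent G (B 1) (B 3)) :
    ∃ b : ZMod 4 → V, (∀ i, b i ∈ B i) ∧ ∀ i, G.Adj (b i) (b (i + 1)) := by
  set U := ⋃ i, B i
  have hU {i : ZMod 4} : B i ⊆ U := Set.subset_iUnion B i
  have hreach : ∀ a ∈ B 0, ∀ b ∈ B 1, G.Adj a b →
      (G.induceWithoutCross U (B 0) (B 1)).Reachable a b := by
    intro a ha b hb _
    obtain ⟨w, hw, a', ha', hwa'⟩ : PartsAdjacent G (B 3) (B 0) := hadj 3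
    obtain ⟨z, hz, w', hw', hzw'⟩ : PartsAdjacent G (B 2) (B 3) := hadj 2
    obtain ⟨b', hb', z', hz', hb'z'⟩ : PartsAdjacent G (B 1) (B 2) := hadj 1
    have h30 := connected_induce_union (hconn 3).preconnected (hconn 0).preconnected hw ha' hwa'
    have h12 := connected_induce_union (hconn 1).preconnected (hconn 2).preconnected hb' hz' hb'z'
    have h123 := connected_induce_union h12.preconnected (hconn 3).preconnected (.inr hz) hw' hzw'
    have hd30 : Disjoint (B 3 ∪ B 0) (B 1) :=
      Set.disjoint_union_left.2 ⟨hdisj (by decide), hdisj (by decide)⟩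
    have hd123 : Disjoint (B 1 ∪ B 2 ∪ B 3) (B 0) := Set.disjoint_union_left.2
      ⟨Set.disjoint_union_left.2 ⟨hdisj (by decide), hdisj (by decide)⟩, hdisj (by decide)⟩
    exact (induceWithoutCross.reachable_of_connected h30 (Set.union_subset hU hU) (.inr hd30)
      (.inr ha) (.inl hw)).trans <| induceWithoutCross.reachable_of_connected h123
        (Set.union_subset (Set.union_subset hU hU) hU) (.inl hd123) (.inr hw) (.inl (.inl hb))
  obtain ⟨m, p, hm, hp, hp0, hpm, hpath⟩ := hG.exists_short_isInducedCycle (hadj 0) hreach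
  have hpart {i : ℕ} (hi : i < m) : ∃ j, p i ∈ B j :=
    Set.mem_iUnion.1 (induceWithoutCross.mem_of_adj (hpath i hi))
  rcases hm with rfl | rfl
  · exfalso
    obtain ⟨j, hj⟩ := hpart (i := 1) (by omega)
    fin_cases j
    · exact induceWithoutCross.not_cross (hpath 1 (by omega)) hj hpm
    · exact induceWithoutCross.not_cross (hpath 0 (by omega)) hp0 hj
    · exact hn02 ⟨p 0, hp0, p 1, hj, hp.adj_succ (by omega)⟩
    · exact hn13 ⟨p 2, hpm, p 1, hj, (hp.adj_succ (i := 1) (by omega)).symm⟩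
  have hp1 : p 1 ∈ B 3 := by
    obtain ⟨j, hj⟩ := hpart (i := 1) (by omega)
    fin_cases j
    · exfalso
      obtain ⟨j', hj'⟩ := hpart (i := 2) (by omega)
      fin_cases j'
      · exact induceWithoutCross.not_cross (hpath 2 (by omega)) hj' hpm
      · exact induceWithoutCross.not_cross (hpath 1 (by omega)) hj hj'
      · exact hn02 ⟨p 1, hj, p 2, hj', hp.adj_succ (by omega)⟩
      · exact hn13 ⟨p 3, hpm, p 2, hj', (hp.adj_succ (i := 2) (by omega)).symm⟩
    · exact (induceWithoutCross.not_cross (hpath 0 (by omega)) hp0 hj).elim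
    · exact (hn02 ⟨p 0, hp0, p 1, hj, hp.adj_succ (by omega)⟩).elim
    · exact hj
  have hp2 : p 2 ∈ B 2 := by
    obtain ⟨j, hj⟩ := hpart (i := 2) (by omega)
    fin_cases j
    · exact (induceWithoutCross.not_cross (hpath 2 (by omega)) hj hpm).elim
    · exact (hn13 ⟨p 2, hj, p 1, hp1, (hp.adj_succ (i := 1) (by omega)).symm⟩).elim
    · exact hj
    · exact (hn13 ⟨p 3, hpm, p 2, hj, (hp.adj_succ (i := 2) (by omega)).symm⟩).elim
  refine ⟨![p 0, p 3, p 2, p 1], fun i => ?_, fun i => ?_⟩ <;> fin_cases i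
  exacts [hp0, hpm, hp2, hp1, hp.adj_zero_last (by omega), (hp.adj_succ (i := 2) (by omega)).symm,
    (hp.adj_succ (i := 1) (by omega)).symm, (hp.adj_succ (i := 0) (by omega)).symm]

lemma bset_inter_bset_nonempty {ι : Type*} [AddGroupWithOne ι] {B : ι → Set V} {b : ι → V}
    (hb : ∀ i, b i ∈ B i) (hadj : ∀ i, G.Adj (b i) (b (i + 1))) (i : ι) :
    (Bset G (B i) (B (i - 1)) ∩ Bset G (B i) (B (i + 1))).Nonempty :=
  ⟨b i, ⟨hb i, b (i - 1), hb _, by simpa using (hadj (i - 1)).symm⟩, hb i, b (i + 1), hb _, hadj i⟩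

lemma not_adj_of_not_partsAdjacent_diagonals {B : ZMod 4 → Set V} {b : ZMod 4 → V}
    (hb : ∀ i, b i ∈ B i) (hn02 : ¬ PartsAdjacent G (B 0) (B 2))
    (hn13 : ¬ PartsAdjacent G (B 1) (B 3)) {i j : ZMod 4} (hij : i ≠ j) (hji : j ≠ i + 1)
    (hij' : i ≠ j + 1) : ¬ G.Adj (b i) (b j) := by
  obtain rfl : j = i + 2 := by revert i j; decide
  fin_cases i
  · exact fun h => hn02 ⟨_, hb 0, _, hb 2, h⟩
  · exact fun h => hn13 ⟨_, hb 1, _, hb 3, h⟩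
  · exact fun h => hn02 ⟨_, hb 0, _, hb 2, h.symm⟩
  · exact fun h => hn13 ⟨_, hb 1, _, hb 3, h.symm⟩

end SimpleGraph

theorem branch_cycle_lifts_general {V : Type*}
    (G : SimpleGraph V) (hG : IsCocomparability G)
    (P : Set (Set V)) (hP : IsBranchPartition G P)
    (k : ℕ) (hk : k = 3 ∨ k = 4) (B : ZMod k → Set V)
    (hmem : ∀ i : ZMod k, B i ∈ P)
    (hinj : Function.Injective B)
    (hadj : ∀ i : ZMod k, PartsAdjacent G (B i) (B (i + 1)))
    (hnonadj : k = 4 → ¬ PartsAdjacent G (B 0) (B 2) ∧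
      ¬ PartsAdjacent G (B 1) (B 3)) :
    (∀ i : ZMod k, (Bset G (B i) (B (i - 1)) ∩ Bset G (B i) (B (i + 1))).Nonempty) ∧
    ∃ b : ZMod k → V, (∀ i : ZMod k, b i ∈ B i) ∧ Function.Injective b ∧
      (∀ i : ZMod k, G.Adj (b i) (b (i + 1))) ∧
      (∀ i j : ZMod k, i ≠ j → j ≠ i + 1 → i ≠ j + 1 → ¬ G.Adj (b i) (b j)) := by
  obtain ⟨-, hdisjP, -, hconnP, -, hC4P⟩ := hP
  have hdisj : Pairwise (Function.onFun Disjoint B) :=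
    fun i j hij => hdisjP _ (hmem i) _ (hmem j) (hinj.ne hij)
  have hconn (i : ZMod k) := hconnP _ (hmem i)
  obtain ⟨b, hb, hbadj⟩ : ∃ b : ZMod k → V, (∀ i, b i ∈ B i) ∧ ∀ i, G.Adj (b i) (b (i + 1)) := by
    rcases hk with rfl | rfl
    · exact G.exists_triangle_of_cyclic_parts hG hdisj hconn hadj
        fun i a b c d h => hC4P a b c d h _ (hmem i)
    · exact G.exists_square_of_cyclic_parts hG hdisj hconn hadj (hnonadj rfl).1 (hnonadj rfl).2
  refine ⟨G.bset_inter_bset_nonempty hb hbadj, b, hb,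
    Function.injective_of_mem_of_pairwise_disjoint hb hdisj, hbadj, fun i j hij hji hij' => ?_⟩
  rcases hk with rfl | rfl
  · -- In `ZMod 3` any two distinct indices are consecutive.
    exact absurd hij' (by revert i j; decide)
  · exact G.not_adj_of_not_partsAdjacent_diagonals hb (hnonadj rfl).1 (hnonadj rfl).2 hij hji hij'

theorem branch_cycle_lifts {V : Type*} [Fintype V]
    (G : SimpleGraph V) (hG : IsCocomparability G)
    (P : Set (Set V)) (hP : IsBranchPartition G P)
    (k : ℕ) (hk : k = 3 ∨ k = 4) (B : ZMod k → Set V)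
    (hmem : ∀ i : ZMod k, B i ∈ P)
    (hinj : Function.Injective B)
    (hadj : ∀ i : ZMod k, PartsAdjacent G (B i) (B (i + 1)))
    (hnonadj : k = 4 → ¬ PartsAdjacent G (B 0) (B 2) ∧
      ¬ PartsAdjacent G (B 1) (B 3)) :
    (∀ i : ZMod k, (Bset G (B i) (B (i - 1)) ∩ Bset G (B i) (B (i + 1))).Nonempty) ∧
    ∃ b : ZMod k → V, (∀ i : ZMod k, b i ∈ B i) ∧ Function.Injective b ∧
      (∀ i : ZMod k, G.Adj (b i) (b (i + 1))) ∧
      (∀ i j : ZMod k, i ≠ j → j ≠ i + 1 → i ≠ j + 1 → ¬ G.Adj (b i) (b j)) :=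
  branch_cycle_lifts_general G hG P hP k hk B hmem hinj hadj hnonadj
end

section
/- Let G be a finite simple graph with an umbrella-free ordering σ, and let A and B be disjoint nonempty sets of vertices such that the subgraphs of G induced by A and by B are connected and there is no edge of G between A and B. If the σ-least element of A strictly σ-precedes the σ-least element of B, then a <_σ b for every a ∈ A and every b ∈ B. -/
/-! If some `b ∈ B` preceded some `a ∈ A`, then `a₀ < b < a`. A walk inside `A` from `a₀` to `a`
must step over `b` along some edge `uv` with `u < b < v`, and umbrella-freeness makes `b`
adjacent to `u` or `v`, an edge between `A` and `B`. -/

namespace UmbrellaFree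

variable {V : Type*} {G : SimpleGraph V} {σ : LinearOrder V}

theorem exists_mem_support_eq_or_adj_s16 (h : UmbrellaFree G σ) {b : V} :
    ∀ {x y : V} (p : G.Walk x y), σ.lt x b → σ.lt b y →
      ∃ v ∈ p.support, v = b ∨ G.Adj v b := by
  let _ := σ
  intro x y p
  induction p with
  | nil => exact fun hxb hbx => absurd hxb (lt_asymm hbx)
  | @cons u v w huv p ih =>
    intro hub hbw
    rcases lt_trichotomy v b with hvb | rfl | hbv
    · obtain ⟨t, ht, htb⟩ := ih hvb hbw
      exact ⟨t, List.mem_cons_of_mem u ht, htb⟩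
    · exact ⟨v, by simp, Or.inl rfl⟩
    · rcases h u b v hub hbv huv with hub' | hbv'
      · exact ⟨u, by simp, Or.inr hub'⟩
      · exact ⟨v, by simp, Or.inr hbv'.symm⟩

theorem not_lt_lt_of_preconnected (h : UmbrellaFree G σ) {A : Set V}
    (hA : (G.induce A).Preconnected) {b : V} (hbA : b ∉ A) (hnoadj : ∀ a ∈ A, ¬ G.Adj a b)
    {x y : V} (hx : x ∈ A) (hy : y ∈ A) (hxb : σ.lt x b) (hby : σ.lt b y) : False := by
  obtain ⟨p⟩ := hA ⟨x, hx⟩ ⟨y, hy⟩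
  obtain ⟨v, hv, hvb⟩ :=
    h.exists_mem_support_eq_or_adj_s16 (p.map (SimpleGraph.Embedding.induce A).toHom) hxb hby
  rw [SimpleGraph.Walk.support_map, List.mem_map] at hv
  obtain ⟨v, -, rfl⟩ := hv
  rcases hvb with hvb | hvb
  · exact hbA (hvb ▸ v.2)
  · exact hnoadj v v.2 hvb

end UmbrellaFree

theorem umbrellaFree_separated_components_general {V : Type*}
    (G : SimpleGraph V) (σ : LinearOrder V) (h : UmbrellaFree G σ)
    (A B : Set V)
    (hdisj : Disjoint A B)
    (hconnA : (SimpleGraph.induce A G).Connected)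
    (hnoedge : ∀ a ∈ A, ∀ b ∈ B, ¬ G.Adj a b)
    (hmin : ∃ a0 ∈ A, ∃ b0 ∈ B,
      (∀ a ∈ A, σ.le a0 a) ∧ (∀ b ∈ B, σ.le b0 b) ∧ σ.lt a0 b0) :
    ∀ a ∈ A, ∀ b ∈ B, σ.lt a b := by
  let _ := σ
  obtain ⟨a0, ha0, b0, -, -, hminB, ha0b0⟩ := hmin
  intro a ha b hb
  have hbA : b ∉ A := fun hbA => hdisj.ne_of_mem hbA hb rfl
  refine lt_of_le_of_ne (le_of_not_gt fun hba => ?_) fun hab => hbA (hab ▸ ha)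
  exact h.not_lt_lt_of_preconnected hconnA.preconnected hbA (fun a' ha' => hnoedge a' ha' b hb)
    ha0 ha (ha0b0.trans_le (hminB b hb)) hba

theorem umbrellaFree_separated_components {V : Type*} [Fintype V]
    (G : SimpleGraph V) (σ : LinearOrder V) (h : UmbrellaFree G σ)
    (A B : Set V) (hA : A.Nonempty) (hB : B.Nonempty)
    (hdisj : Disjoint A B)
    (hconnA : (SimpleGraph.induce A G).Connected)
    (hconnB : (SimpleGraph.induce B G).Connected)
    (hnoedge : ∀ a ∈ A, ∀ b ∈ B, ¬ G.Adj a b)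
    (hmin : ∃ a0 ∈ A, ∃ b0 ∈ B,
      (∀ a ∈ A, σ.le a0 a) ∧ (∀ b ∈ B, σ.le b0 b) ∧ σ.lt a0 b0) :
    ∀ a ∈ A, ∀ b ∈ B, σ.lt a b :=
  umbrellaFree_separated_components_general G σ h A B hdisj hconnA hnoedge hmin
end

section
/- Let G be a finite simple graph with an umbrella-free ordering σ. If u, v, w are vertices with u <_σ v <_σ w, a vertex x is adjacent to both u and w, and v is adjacent to neither u nor w, then x is adjacent to v. (In particular, in a bipartite graph with an umbrella-free ordering, the neighborhood of every vertex of one side is consecutive among the vertices of the other side, i.e., the ordering has the adjacency property.) -/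
namespace UmbrellaFree

variable {V : Type*} {G : SimpleGraph V} {σ : LinearOrder V}

theorem adj_of_lt_of_not_adj_right (h : UmbrellaFree G σ) {x v w : V}
    (hxv : σ.lt x v) (hvw : σ.lt v w) (hxw : G.Adj x w) (hnvw : ¬ G.Adj v w) :
    G.Adj x v :=
  (h x v w hxv hvw hxw).resolve_right hnvw

theorem adj_of_lt_of_not_adj_left (h : UmbrellaFree G σ) {u v x : V}
    (huv : σ.lt u v) (hvx : σ.lt v x) (hux : G.Adj u x) (hnuv : ¬ G.Adj u v) :
    G.Adj v x :=
  (h u v x huv hvx hux).resolve_left hnuv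

end UmbrellaFree

theorem umbrellaFree_adjacency_property_general {V : Type*}
    (G : SimpleGraph V) (σ : LinearOrder V) (h : UmbrellaFree G σ)
    (u v w x : V) (huv : σ.lt u v) (hvw : σ.lt v w)
    (hxu : G.Adj x u) (hxw : G.Adj x w)
    (hvu : ¬ G.Adj v u) (hvwadj : ¬ G.Adj v w) :
    G.Adj x v := by
  let := σ
  rcases lt_trichotomy x v with hxv | rfl | hvx
  · exact h.adj_of_lt_of_not_adj_right hxv hvw hxw hvwadj
  · exact absurd hxu hvu
  · exact (h.adj_of_lt_of_not_adj_left huv hvx hxu.symm (fun huv' => hvu huv'.symm)).symm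

theorem umbrellaFree_adjacency_property {V : Type*} [Fintype V]
    (G : SimpleGraph V) (σ : LinearOrder V) (h : UmbrellaFree G σ)
    (u v w x : V) (huv : σ.lt u v) (hvw : σ.lt v w)
    (hxu : G.Adj x u) (hxw : G.Adj x w)
    (hvu : ¬ G.Adj v u) (hvwadj : ¬ G.Adj v w) :
    G.Adj x v :=
  umbrellaFree_adjacency_property_general G σ h u v w x huv hvw hxu hxw hvu hvwadj
end
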